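/- arXiv:2411.19183 — 8 statements merged into one kernel-verified Lean document; each statement's English description precedes it below -/
import Mathlib

section
/- Let P be a rational polygon in ℝ² and H = {v : u·v ≥ h} a half-space with u a primitive integral dual vector and h ∈ ℤ. If P contains a lattice point in the interior of H and also contains a lattice segment of lattice length 1 in the boundary hyperplane {v : u·v = h}, then P contains a lattice point on the hyperplane {v : u·v = h+1}. -/
/-!
Let `d = b - a` and pick `e` with `u·e = 1` (Bézout). Because `[a, b]` has lattice length one,
`d` spans the integer kernel of `u`, so `(d, e)` is a lattice basis and `z = a + S d + m e` with
`m = u·z - h ≥ 1`. The triangle `a b z` is contained in `P`; its slice at height `h + 1` is the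
segment `a + e + [S/m, (S + m - 1)/m] d`, which contains the lattice point `a + e + k d` for
`k = ⌈S/m⌉`.
-/

open Set

/-- The lattice ℤ² inside ℝ². -/
def latt : Set (ℝ × ℝ) := {p | ∃ m n : ℤ, p = ((m : ℝ), (n : ℝ))}

def ofLattice : ℤ × ℤ →+ ℝ × ℝ := (Int.castAddHom ℝ).prodMap (Int.castAddHom ℝ)

@[simp]
lemma ofLattice_apply (c : ℤ × ℤ) : ofLattice c = ((c.1 : ℝ), (c.2 : ℝ)) := rfl

lemma ofLattice_zsmul (k : ℤ) (c : ℤ × ℤ) : ofLattice (k • c) = (k : ℝ) • ofLattice c := by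
  rw [map_zsmul, Int.cast_smul_eq_zsmul]

def IsPrimitiveSegment (a b : ℤ × ℤ) : Prop :=
  ∀ c : ℤ × ℤ, ofLattice c ∈ segment ℝ (ofLattice a) (ofLattice b) → c = a ∨ c = b

lemma ofLattice_add_mem_segment (a w : ℤ × ℤ) {t : ℤ} (ht : 1 ≤ t) :
    ofLattice (a + w) ∈ segment ℝ (ofLattice a) (ofLattice (a + t • w)) := by
  have htR : (1 : ℝ) ≤ t := by exact_mod_cast ht
  convert lineMap_mem_segment (𝕜 := ℝ) (ofLattice a) (ofLattice (a + t • w))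
    (t := (t : ℝ)⁻¹) ⟨by positivity, inv_le_one_of_one_le₀ htR⟩ using 1
  rw [AffineMap.lineMap_apply_module', map_add, map_add, ofLattice_zsmul, add_sub_cancel_left,
    smul_smul, inv_mul_cancel₀ (by positivity), one_smul, add_comm]

lemma IsPrimitiveSegment.eq_one_of_one_le {a w : ℤ × ℤ} {t : ℤ}
    (hseg : IsPrimitiveSegment a (a + t • w)) (hw : w ≠ 0) (ht : 1 ≤ t) : t = 1 := by
  rcases hseg (a + w) (ofLattice_add_mem_segment a w ht) with h | h
  · exact absurd (add_eq_left.mp h) hw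
  · have : (t - 1) • w = 0 := by
      rw [sub_smul, one_smul, sub_eq_zero]
      exact (add_left_cancel h).symm
    exact sub_eq_zero.mp ((smul_eq_zero.mp this).resolve_right hw)

lemma IsPrimitiveSegment.eq_one_or_eq_neg_one {a w : ℤ × ℤ} {t : ℤ}
    (hseg : IsPrimitiveSegment a (a + t • w)) (hw : w ≠ 0) (ht : t ≠ 0) : t = 1 ∨ t = -1 := by
  rcases ht.lt_or_gt with ht | ht
  · have hseg' : IsPrimitiveSegment a (a + (-t) • -w) := by rwa [neg_smul_neg]
    exact .inr (neg_eq_iff_eq_neg.mp (hseg'.eq_one_of_one_le (neg_ne_zero.mpr hw) (by omega)))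
  · exact .inl (hseg.eq_one_of_one_le hw ht)

lemma exists_eq_zsmul_of_isCoprime {u w : ℤ × ℤ} (hu : IsCoprime u.1 u.2)
    (hw : u.1 * w.1 + u.2 * w.2 = 0) : ∃ t : ℤ, w = t • (-u.2, u.1) := by
  obtain ⟨x, y, hxy⟩ := hu
  refine ⟨x * w.2 - y * w.1, Prod.ext ?_ ?_⟩
  · simp only [Prod.smul_mk, smul_eq_mul]
    linear_combination -w.1 * hxy + x * hw
  · simp only [Prod.smul_mk, smul_eq_mul]
    linear_combination -w.2 * hxy + y * hw

lemma IsPrimitiveSegment.exists_eq_zsmul {u a b : ℤ × ℤ} (hu : IsCoprime u.1 u.2) (hab : a ≠ b)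
    (hseg : IsPrimitiveSegment a b) (hd : u.1 * (b - a).1 + u.2 * (b - a).2 = 0)
    {w : ℤ × ℤ} (hw : u.1 * w.1 + u.2 * w.2 = 0) : ∃ s : ℤ, w = s • (b - a) := by
  have hu0 : ((-u.2, u.1) : ℤ × ℤ) ≠ 0 := by
    rintro h
    simp only [Prod.mk_eq_zero, neg_eq_zero] at h
    exact not_isCoprime_zero_zero (h.2 ▸ h.1 ▸ hu)
  obtain ⟨t, ht⟩ := exists_eq_zsmul_of_isCoprime hu hd
  obtain ⟨s, rfl⟩ := exists_eq_zsmul_of_isCoprime hu hw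
  obtain rfl := sub_eq_iff_eq_add'.mp ht
  have ht0 : t ≠ 0 := by rintro rfl; simp at hab
  refine ⟨s * t, ?_⟩
  rw [add_sub_cancel_left, smul_smul, mul_assoc]
  rcases hseg.eq_one_or_eq_neg_one hu0 ht0 with rfl | rfl <;> simp

lemma Int.exists_mul_mem_Icc (S : ℤ) {m : ℤ} (hm : 0 < m) :
    ∃ k : ℤ, S ≤ k * m ∧ k * m ≤ S + m - 1 := by
  have hdiv := Int.mul_ediv_add_emod (S + m - 1) m
  have := Int.emod_nonneg (S + m - 1) hm.ne'
  have := Int.emod_lt_of_pos (S + m - 1) hm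
  exact ⟨(S + m - 1) / m, by linarith [mul_comm m ((S + m - 1) / m)],
    by linarith [mul_comm m ((S + m - 1) / m)]⟩

section Convex

variable {E : Type*} [AddCommGroup E] [Module ℝ E] {P : Set E}

lemma Convex.add_smul_mem_of_mem_Icc (hP : Convex ℝ P) {x d : E} {α β : ℝ} (hx : x ∈ P)
    (hβ : x + β • d ∈ P) (hα : α ∈ Icc 0 β) : x + α • d ∈ P := by
  rcases (hα.1.trans hα.2).eq_or_lt with rfl | hβ0
  · simpa [le_antisymm hα.2 hα.1] using hx
  · have := hP.add_smul_mem hx hβ ⟨div_nonneg hα.1 hβ0.le, div_le_one_of_le₀ hα.2 hβ0.le⟩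
    rwa [smul_smul, div_mul_cancel₀ _ hβ0.ne'] at this

lemma Convex.add_add_smul_mem_of_triangle (hP : Convex ℝ P) {a d e : E} {m S k : ℝ}
    (hm : 1 ≤ m) (ha : a ∈ P) (hb : a + d ∈ P) (hz : a + m • e + S • d ∈ P)
    (hk₁ : S ≤ k * m) (hk₂ : k * m ≤ S + m - 1) : a + e + k • d ∈ P := by
  -- the slice of the triangle `a, a + d, z` at height `1/m` joins these two points
  have hQ := hP.add_smul_sub_mem ha hz (t := m⁻¹) ⟨by positivity, inv_le_one_of_one_le₀ hm⟩
  have hQ' := hP.add_smul_sub_mem hb hz (t := m⁻¹) ⟨by positivity, inv_le_one_of_one_le₀ hm⟩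
  have key := hP.add_smul_mem_of_mem_Icc hQ (d := d) (β := 1 - m⁻¹) (α := k - S / m) ?_ ?_
  · convert key using 1
    match_scalars <;> field_simp <;> ring
  · convert hQ' using 1
    match_scalars <;> field_simp
    ring
  · constructor
    · rw [sub_nonneg, div_le_iff₀ (by positivity)]; exact hk₁
    · have hk : k ≤ (S + m - 1) / m := by rw [le_div_iff₀ (by positivity)]; exact hk₂
      have : (S + m - 1) / m = 1 + S / m - m⁻¹ := by field_simp; ring
      linarith

end Convex

theorem stmt_1_general (P : Set (ℝ × ℝ))
    (hP : ∃ V : Finset (ℝ × ℝ),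
      (∀ p ∈ V, ∃ q₁ q₂ : ℚ, p = ((q₁ : ℝ), (q₂ : ℝ))) ∧ P = convexHull ℝ (V : Set (ℝ × ℝ)))
    (u : ℤ × ℤ) (hu : IsCoprime u.1 u.2) (h : ℤ)
    (hint : ∃ z : ℤ × ℤ, ((z.1 : ℝ), (z.2 : ℝ)) ∈ P ∧ h < u.1 * z.1 + u.2 * z.2)
    (hseg : ∃ a b : ℤ × ℤ, a ≠ b ∧
      u.1 * a.1 + u.2 * a.2 = h ∧ u.1 * b.1 + u.2 * b.2 = h ∧
      segment ℝ ((a.1 : ℝ), (a.2 : ℝ)) ((b.1 : ℝ), (b.2 : ℝ)) ⊆ P ∧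
      (∀ c : ℤ × ℤ,
        ((c.1 : ℝ), (c.2 : ℝ)) ∈ segment ℝ ((a.1 : ℝ), (a.2 : ℝ)) ((b.1 : ℝ), (b.2 : ℝ)) →
        c = a ∨ c = b)) :
    ∃ c : ℤ × ℤ, ((c.1 : ℝ), (c.2 : ℝ)) ∈ P ∧ u.1 * c.1 + u.2 * c.2 = h + 1 := by
  obtain ⟨V, -, rfl⟩ := hP
  obtain ⟨z, hzP, hz⟩ := hint
  obtain ⟨a, b, hab, ha, hb, hsub, hprim : IsPrimitiveSegment a b⟩ := hseg
  obtain ⟨x, y, hxy⟩ := id hu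
  set m := u.1 * z.1 + u.2 * z.2 - h with hm
  have hd : u.1 * (b - a).1 + u.2 * (b - a).2 = 0 := by
    simp only [Prod.fst_sub, Prod.snd_sub]
    linarith
  -- `(b - a, (x, y))` is a lattice basis in which `z - a` has coordinates `(S, m)`
  obtain ⟨S, hS⟩ := hprim.exists_eq_zsmul hu hab hd (w := z - a - m • (x, y)) (by
    simp only [Prod.fst_sub, Prod.snd_sub, Prod.smul_mk, smul_eq_mul]
    linear_combination -ha - m * hxy - hm)
  obtain ⟨k, hk₁, hk₂⟩ := Int.exists_mul_mem_Icc S (m := m) (by omega)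
  refine ⟨a + (x, y) + k • (b - a), ?_, ?_⟩
  · rw [← ofLattice_apply, map_add, map_add, ofLattice_zsmul, map_sub]
    refine (convex_convexHull ℝ _).add_add_smul_mem_of_triangle (m := m) (S := S)
      (by exact_mod_cast (by omega : 1 ≤ m)) (hsub (left_mem_segment ℝ _ _)) ?_ ?_
      (by exact_mod_cast hk₁) (by exact_mod_cast hk₂)
    · rw [add_sub_cancel]; exact hsub (right_mem_segment ℝ _ _)
    · rw [← ofLattice_zsmul, ← map_sub, ← ofLattice_zsmul, ← map_add, ← map_add]
      rwa [← hS, sub_sub, add_sub_cancel]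
  · simp only [Prod.fst_add, Prod.snd_add, Prod.smul_fst, Prod.smul_snd, smul_eq_mul]
    linear_combination ha + k * hd + hxy

/-- if a rational polygon `P` contains a lattice point strictly inside the
half-space `u·x ≥ h` and a lattice segment of lattice length 1 on the hyperplane `u·x = h`,
then it contains a lattice point on the hyperplane `u·x = h+1`. -/
theorem stmt_1 (P : Set (ℝ × ℝ))
    (hP : ∃ V : Finset (ℝ × ℝ),
      (∀ p ∈ V, ∃ q₁ q₂ : ℚ, p = ((q₁ : ℝ), (q₂ : ℝ))) ∧ P = convexHull ℝ (V : Set (ℝ × ℝ)))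
    (h2d : (interior P).Nonempty)
    (u : ℤ × ℤ) (hu : IsCoprime u.1 u.2) (h : ℤ)
    (hint : ∃ z : ℤ × ℤ, ((z.1 : ℝ), (z.2 : ℝ)) ∈ P ∧ h < u.1 * z.1 + u.2 * z.2)
    (hseg : ∃ a b : ℤ × ℤ, a ≠ b ∧
      u.1 * a.1 + u.2 * a.2 = h ∧ u.1 * b.1 + u.2 * b.2 = h ∧
      segment ℝ ((a.1 : ℝ), (a.2 : ℝ)) ((b.1 : ℝ), (b.2 : ℝ)) ⊆ P ∧
      (∀ c : ℤ × ℤ,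
        ((c.1 : ℝ), (c.2 : ℝ)) ∈ segment ℝ ((a.1 : ℝ), (a.2 : ℝ)) ((b.1 : ℝ), (b.2 : ℝ)) →
        c = a ∨ c = b)) :
    ∃ c : ℤ × ℤ, ((c.1 : ℝ), (c.2 : ℝ)) ∈ P ∧ u.1 * c.1 + u.2 * c.2 = h + 1 :=
  stmt_1_general P hP u hu h hint hseg
end

section
/- Let P be a denominator 2 polygon with at least one interior lattice point. Then the number of interior lattice points of 2P satisfies i(2P) ≥ b(P) + 2·i(P) − 1, where b(P) and i(P) are the numbers of boundary and interior lattice points of P. -/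
open Set Pointwise

/-- Number of lattice points on the boundary of `Q`. -/
noncomputable def bcount (Q : Set (ℝ × ℝ)) : ℕ := (frontier Q ∩ latt).ncard

/-- Number of lattice points in the interior of `Q`. -/
noncomputable def icount (Q : Set (ℝ × ℝ)) : ℕ := (interior Q ∩ latt).ncard

/-- A denominator 2 polygon: a two-dimensional polytope all of whose vertices become
lattice points after dilation by 2. -/
def IsDen2 (P : Set (ℝ × ℝ)) : Prop :=
  (∃ V : Finset (ℝ × ℝ), (∀ v ∈ V, (2 : ℝ) • v ∈ latt) ∧
    P = convexHull ℝ (V : Set (ℝ × ℝ))) ∧ (interior P).Nonempty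

/-!
The lattice points `A = P ∩ ℤ²` and the interior lattice points `B = P° ∩ ℤ²` satisfy
`A + B ⊆ (P + P°) ∩ ℤ² ⊆ (2P)° ∩ ℤ²`, since `2P = P + P` for convex `P`. The Cauchy–Davenport
inequality `|A + B| ≥ |A| + |B| - 1` in the torsion-free group `ℝ²` then gives
`i(2P) ≥ (b(P) + i(P)) + i(P) - 1`.
-/

open Topology

lemma latt_eq_range : latt = range (Prod.map ((↑) : ℤ → ℝ) ((↑) : ℤ → ℝ)) := by
  ext p
  simp [latt, Prod.ext_iff, eq_comm]

lemma finite_inter_latt {S : Set (ℝ × ℝ)} (hS : Bornology.IsBounded S) :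
    (S ∩ latt).Finite := by
  set ι := Prod.map ((↑) : ℤ → ℝ) ((↑) : ℤ → ℝ)
  have hι : IsClosedEmbedding ι :=
    Int.isClosedEmbedding_coe_real.prodMap Int.isClosedEmbedding_coe_real
  have hpre : (ι ⁻¹' closure S).Finite :=
    (hι.isCompact_preimage hS.isCompact_closure).finite_of_discrete
  refine (hpre.image ι).subset ?_
  rw [latt_eq_range]
  rintro _ ⟨hx, z, rfl⟩
  exact ⟨z, subset_closure hx, rfl⟩

lemma add_mem_latt {x y : ℝ × ℝ} (hx : x ∈ latt) (hy : y ∈ latt) : x + y ∈ latt := by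
  obtain ⟨m, n, rfl⟩ := hx
  obtain ⟨m', n', rfl⟩ := hy
  exact ⟨m + m', n + n', by push_cast; rfl⟩

lemma Set.ncard_add_ncard_sub_one_le_ncard_add {G : Type*} [AddGroup G] [IsAddTorsionFree G]
    {s t : Set G} (hs : s.Finite) (ht : t.Finite) (hs' : s.Nonempty) (ht' : t.Nonempty) :
    s.ncard + t.ncard - 1 ≤ (s + t).ncard := by
  classical
  lift s to Finset G using hs
  lift t to Finset G using ht
  rw [← Finset.coe_add, ncard_coe_finset, ncard_coe_finset, ncard_coe_finset]
  exact cauchy_davenport_of_isAddTorsionFree (by simpa using hs') (by simpa using ht')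

lemma IsClosed.ncard_inter_eq_frontier_add_interior {X : Type*} [TopologicalSpace X]
    {s L : Set X} (hs : IsClosed s) (hfin : (s ∩ L).Finite) :
    (s ∩ L).ncard = (frontier s ∩ L).ncard + (interior s ∩ L).ncard := by
  rw [hs.frontier_eq,
    ← ncard_sdiff_add_ncard_of_subset (inter_subset_inter_left L interior_subset) hfin,
    inter_sdiff_distrib_right]

lemma Convex.add_interior_subset_interior_two_smul {E : Type*} [AddCommGroup E] [Module ℝ E]
    [TopologicalSpace E] [IsTopologicalAddGroup E] {s : Set E} (hs : Convex ℝ s) :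
    s + interior s ⊆ interior ((2 : ℝ) • s) := by
  rw [show (2 : ℝ) = 1 + 1 by norm_num, hs.add_smul zero_le_one zero_le_one, one_smul]
  exact subset_interior_add_right

/-- a denominator 2 polygon with an interior lattice point satisfies
`i(2P) ≥ b(P) + 2·i(P) − 1`. -/
theorem stmt_6 (P : Set (ℝ × ℝ)) (hP : IsDen2 P)
    (hi : (interior P ∩ latt).Nonempty) :
    (bcount P : ℤ) + 2 * (icount P : ℤ) - 1 ≤ (icount ((2 : ℝ) • P) : ℤ) := by
  obtain ⟨⟨V, -, hPV⟩, -⟩ := hP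
  have hconv : Convex ℝ P := hPV ▸ convex_convexHull ℝ _
  have hcomp : IsCompact P := hPV ▸ V.finite_toSet.isCompact_convexHull (𝕜 := ℝ)
  have hfin : (P ∩ latt).Finite := finite_inter_latt hcomp.isBounded
  have hfin' : (interior P ∩ latt).Finite :=
    hfin.subset (inter_subset_inter_left _ interior_subset)
  have hsumset : P ∩ latt + interior P ∩ latt ⊆ interior ((2 : ℝ) • P) ∩ latt := by
    rintro _ ⟨x, hx, y, hy, rfl⟩
    exact ⟨hconv.add_interior_subset_interior_two_smul (add_mem_add hx.1 hy.1),
      add_mem_latt hx.2 hy.2⟩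
  have hcd := ncard_add_ncard_sub_one_le_ncard_add hfin hfin'
    (hi.mono (inter_subset_inter_left _ interior_subset)) hi
  have hle := ncard_le_ncard hsumset
    (finite_inter_latt ((hcomp.smul (2 : ℝ)).isBounded.subset interior_subset))
  have hsplit := hcomp.isClosed.ncard_inter_eq_frontier_add_interior hfin
  have hpos : 0 < (interior P ∩ latt).ncard := (ncard_pos hfin').2 hi
  unfold bcount icount
  omega
end

section
/- Let P be an infinitely growable denominator 2 polygon, i.e. P is affinely unimodularly equivalent to a subset of the strip [0,1] × ℝ. Then P has no interior lattice points, and if additionally 2P has at least one interior lattice point and P has at least one boundary lattice point, then b(2P) ≤ 2·b(P) + 4. -/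
open Set Pointwise

/-- An affine unimodular map of the plane: an integral affine map whose linear part is
in GL₂(ℤ). -/
def Unimod (f : ℝ × ℝ → ℝ × ℝ) : Prop :=
  ∃ a b c d e g : ℤ, (a * d - b * c = 1 ∨ a * d - b * c = -1) ∧
    ∀ p : ℝ × ℝ,
      f p = ((a : ℝ) * p.1 + (b : ℝ) * p.2 + (e : ℝ),
             (c : ℝ) * p.1 + (d : ℝ) * p.2 + (g : ℝ))


/-!
After a unimodular change of coordinates `P` is a compact convex set in the strip `[0,1] × ℝ`,
so its interior lies in `(0,1) × ℝ` and misses the lattice, and every lattice point of `P` is a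
boundary point on one of the lines `x = 0`, `x = 1`. The lattice points of `2P` lie on the lines
`x = 0, 1, 2`. On `x = 0` (resp. `x = 2`) they form a run of consecutive integers whose even
members are the doubles of the lattice points of `P` on `x = 0` (resp. `x = 1`), so there are at
most `2 b₀ + 1` (resp. `2 b₁ + 1`) of them. The interior lattice point of `2P` lies on `x = 1`,
and by convexity only the two ends of the chord of `2P` through it can be boundary points.
Summing gives `b(2P) ≤ 2 b(P) + 4`.
-/

namespace Unimod

variable {f : ℝ × ℝ → ℝ × ℝ}

lemma mapsTo_latt (hf : Unimod f) : MapsTo f latt latt := by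
  obtain ⟨a, b, c, d, e, g, -, hf⟩ := hf
  rintro _ ⟨m, n, rfl⟩
  exact ⟨a * m + b * n + e, c * m + d * n + g, by rw [hf]; push_cast; rfl⟩

lemma exists_inverse (hf : Unimod f) :
    ∃ f' : ℝ × ℝ → ℝ × ℝ, Unimod f' ∧ Function.LeftInverse f' f ∧
      Function.RightInverse f' f := by
  obtain ⟨a, b, c, d, e, g, hdet, hf⟩ := hf
  obtain ⟨δ, hδ⟩ : ∃ δ, a * d - b * c = δ := ⟨_, rfl⟩
  have hδδ : δ * δ = 1 := by rcases hdet with h | h <;> rw [← hδ, h] <;> norm_num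
  have hδδℝ : (δ : ℝ) * δ = 1 := by exact_mod_cast hδδ
  have hδℝ : (a : ℝ) * d - b * c = δ := by exact_mod_cast hδ
  -- the inverse matrix is `δ⁻¹ • adj = δ • adj`, since `δ = ±1`
  refine ⟨_, ⟨δ * d, -δ * b, -δ * c, δ * a, δ * (b * g - d * e), δ * (c * e - a * g),
    ?_, fun p => rfl⟩, fun p => ?_, fun p => ?_⟩
  · have hdet' : δ * d * (δ * a) - -δ * b * (-δ * c) = δ := by
      linear_combination δ ^ 2 * hδ + δ * hδδ
    rwa [hdet', ← hδ]
  · rw [hf]; ext <;> push_cast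
    · linear_combination δ * p.1 * hδℝ + p.1 * hδδℝ
    · linear_combination δ * p.2 * hδℝ + p.2 * hδδℝ
  · rw [hf]; ext <;> push_cast
    · linear_combination δ * (p.1 - e) * hδℝ + (p.1 - e) * hδδℝ
    · linear_combination δ * (p.2 - g) * hδℝ + (p.2 - g) * hδδℝ

lemma exists_affineMap (hf : Unimod f) : ∃ A : (ℝ × ℝ) →ᵃ[ℝ] ℝ × ℝ, ⇑A = f := by
  obtain ⟨a, b, c, d, e, g, -, hf⟩ := hf
  let L : ℝ × ℝ →ₗ[ℝ] ℝ × ℝ :=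
    ((a : ℝ) • LinearMap.fst ℝ ℝ ℝ + (b : ℝ) • LinearMap.snd ℝ ℝ ℝ).prod
      ((c : ℝ) • LinearMap.fst ℝ ℝ ℝ + (d : ℝ) • LinearMap.snd ℝ ℝ ℝ)
  refine ⟨L.toAffineMap + AffineMap.const ℝ _ ((e : ℝ), (g : ℝ)), funext fun p => ?_⟩
  simp [L, hf]

lemma continuous (hf : Unimod f) : Continuous f := by
  obtain ⟨A, rfl⟩ := hf.exists_affineMap
  exact A.continuous_of_finiteDimensional

lemma exists_homeomorph (hf : Unimod f) : ∃ F : ℝ × ℝ ≃ₜ ℝ × ℝ, ⇑F = f := by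
  obtain ⟨f', hf', hl, hr⟩ := hf.exists_inverse
  exact ⟨⟨⟨f, f', hl, hr⟩, hf.continuous, hf'.continuous⟩, rfl⟩

lemma injective (hf : Unimod f) : Function.Injective f := by
  obtain ⟨F, rfl⟩ := hf.exists_homeomorph
  exact F.injective

lemma image_latt (hf : Unimod f) : f '' latt = latt := by
  obtain ⟨f', hf', -, hr⟩ := hf.exists_inverse
  refine (hf.mapsTo_latt.image_subset).antisymm fun p hp => ?_
  exact ⟨f' p, hf'.mapsTo_latt hp, hr p⟩

lemma image_interior_inter_latt (hf : Unimod f) (S : Set (ℝ × ℝ)) :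
    f '' (interior S ∩ latt) = interior (f '' S) ∩ latt := by
  obtain ⟨F, rfl⟩ := hf.exists_homeomorph
  rw [image_inter F.injective, F.image_interior, hf.image_latt]

lemma image_frontier_inter_latt (hf : Unimod f) (S : Set (ℝ × ℝ)) :
    f '' (frontier S ∩ latt) = frontier (f '' S) ∩ latt := by
  obtain ⟨F, rfl⟩ := hf.exists_homeomorph
  rw [image_inter F.injective, F.image_frontier, hf.image_latt]

lemma icount_image (hf : Unimod f) (S : Set (ℝ × ℝ)) : icount (f '' S) = icount S := by
  rw [icount, ← hf.image_interior_inter_latt, ncard_image_of_injective _ hf.injective, icount]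

lemma bcount_image (hf : Unimod f) (S : Set (ℝ × ℝ)) : bcount (f '' S) = bcount S := by
  rw [bcount, ← hf.image_frontier_inter_latt, ncard_image_of_injective _ hf.injective, bcount]

lemma convex_image (hf : Unimod f) {S : Set (ℝ × ℝ)} (hS : Convex ℝ S) : Convex ℝ (f '' S) := by
  obtain ⟨A, rfl⟩ := hf.exists_affineMap
  exact hS.affine_image A

lemma exists_image_two_smul (hf : Unimod f) :
    ∃ g : ℝ × ℝ → ℝ × ℝ, Unimod g ∧ ∀ S : Set (ℝ × ℝ), g '' ((2 : ℝ) • S) = (2 : ℝ) • f '' S := by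
  obtain ⟨a, b, c, d, e, g, hdet, hf⟩ := hf
  refine ⟨_, ⟨a, b, c, d, 2 * e, 2 * g, hdet, fun p => rfl⟩, fun S => ?_⟩
  simp only [← image_smul, image_image]
  refine image_congr fun p _ => ?_
  rw [hf]; ext <;> simp <;> ring

end Unimod

lemma IsCompact.finite_inter_latt {K : Set (ℝ × ℝ)} (hK : IsCompact K) : (K ∩ latt).Finite := by
  have hφ := Int.isClosedEmbedding_coe_real.prodMap Int.isClosedEmbedding_coe_real
  refine ((hφ.isCompact_preimage hK).finite_of_discrete.image (Prod.map (↑) (↑))).subset ?_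
  rintro _ ⟨hp, m, n, rfl⟩
  exact ⟨(m, n), hp, rfl⟩

def column (S : Set (ℝ × ℝ)) (t : ℤ) : Set ℤ := {n | ((t : ℝ), (n : ℝ)) ∈ S}

lemma column_mono {S T : Set (ℝ × ℝ)} (h : S ⊆ T) (t : ℤ) : column S t ⊆ column T t :=
  fun _ hn => h hn

lemma injective_mk_intCast (t : ℤ) : Function.Injective fun n : ℤ => ((t : ℝ), (n : ℝ)) :=
  (Prod.mk_right_injective _).comp Int.cast_injective

lemma finite_column {S : Set (ℝ × ℝ)} (hS : (S ∩ latt).Finite) (t : ℤ) : (column S t).Finite :=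
  (hS.preimage (injective_mk_intCast t).injOn).subset fun n hn => ⟨hn, t, n, rfl⟩

lemma ncard_inter_latt_eq_sum_column {S : Set (ℝ × ℝ)} {k : ℕ}
    (hS : S ⊆ Icc 0 (k : ℝ) ×ˢ univ) (hfin : (S ∩ latt).Finite) :
    (S ∩ latt).ncard = ∑ t ∈ Finset.range (k + 1), (column S t).ncard := by
  have hfloor : ∀ m n : ℤ, ((m : ℝ), (n : ℝ)) ∈ S → 0 ≤ m ∧ m ≤ k ∧ ⌊(m : ℝ)⌋₊ = m.toNat := by
    intro m n h
    obtain ⟨h0, hk⟩ : (0 : ℝ) ≤ m ∧ (m : ℝ) ≤ k := (hS h).1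
    exact ⟨by exact_mod_cast h0, by exact_mod_cast hk, by rw [← Int.floor_toNat, Int.floor_intCast]⟩
  rw [ncard_eq_toFinset_card _ hfin,
    Finset.card_eq_sum_card_fiberwise (f := fun p => ⌊p.1⌋₊) (t := Finset.range (k + 1))]
  · refine Finset.sum_congr rfl fun t _ => ?_
    rw [← ncard_coe_finset, ← ncard_image_of_injective _ (injective_mk_intCast t)]
    congr 1
    ext p
    simp only [Finset.coe_filter, Finite.mem_toFinset, mem_ofPred_eq, mem_image, column]
    constructor
    · rintro ⟨⟨hp, m, n, rfl⟩, hm⟩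
      obtain ⟨h0, -, hfl⟩ := hfloor m n hp
      obtain rfl : m = t := by simp only at hm; omega
      exact ⟨n, hp, rfl⟩
    · rintro ⟨n, hn, rfl⟩
      exact ⟨⟨hn, t, n, rfl⟩, by simp⟩
  · rintro _ hp
    obtain ⟨hp, m, n, rfl⟩ := (Finite.mem_toFinset hfin).1 hp
    obtain ⟨h0, hk, hfl⟩ := hfloor m n hp
    simp only [Finset.coe_range, mem_Iio, hfl]
    omega

/-- Among `k` consecutive integers at least `⌊k/2⌋` are even. -/
lemma Set.OrdConnected.ncard_le_two_mul_ncard_halves_add_one {Z : Set ℤ} (hZ : Z.OrdConnected) :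
    Z.ncard ≤ 2 * {n : ℤ | 2 * n ∈ Z}.ncard + 1 := by
  rcases Z.finite_or_infinite with hfin | hinf
  · rcases Z.eq_empty_or_nonempty with rfl | hne
    · simp
    obtain ⟨a, b, rfl⟩ : ∃ a b, Z = Icc a b :=
      ⟨_, _, subset_antisymm (fun n hn => ⟨csInf_le hfin.bddBelow hn, le_csSup hfin.bddAbove hn⟩)
        (hZ.out (hne.csInf_mem hfin) (hne.csSup_mem hfin))⟩
    have hhalves : {n : ℤ | 2 * n ∈ Icc a b} = Icc (-(-a / 2)) (b / 2) := by
      ext n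
      simp only [mem_ofPred_eq, mem_Icc]
      omega
    rw [hhalves, ← Finset.coe_Icc, ← Finset.coe_Icc, ncard_coe_finset, ncard_coe_finset,
      Int.card_Icc, Int.card_Icc]
    omega
  · rw [hinf.ncard]
    omega

lemma Convex.ordConnected_column {C : Set (ℝ × ℝ)} (hC : Convex ℝ C) (t : ℤ) :
    (column C t).OrdConnected := by
  refine ⟨fun a ha b hb n hn => hC.segment_subset ha hb ?_⟩
  have hab : (a : ℝ) ≤ b := by exact_mod_cast hn.1.trans hn.2
  rw [← Prod.image_mk_segment_right, segment_eq_Icc hab]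
  exact ⟨n, ⟨by exact_mod_cast hn.1, by exact_mod_cast hn.2⟩, rfl⟩

lemma column_two_smul_halves (S : Set (ℝ × ℝ)) (t : ℤ) :
    {n : ℤ | 2 * n ∈ column ((2 : ℝ) • S) (2 * t)} = column S t := by
  ext n
  simp [column, mem_smul_set_iff_inv_smul_mem₀ (two_ne_zero' ℝ)]

lemma Convex.ncard_column_two_smul_le {C : Set (ℝ × ℝ)} (hC : Convex ℝ C) (t : ℤ) :
    (column ((2 : ℝ) • C) (2 * t)).ncard ≤ 2 * (column C t).ncard + 1 := by
  rw [← column_two_smul_halves C t]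
  exact ((hC.smul 2).ordConnected_column _).ncard_le_two_mul_ncard_halves_add_one

lemma Convex.mk_mem_interior_of_lt_of_lt {C : Set (ℝ × ℝ)} (hC : Convex ℝ C) {x r a b c : ℝ}
    (hr : (x, r) ∈ interior C) (ha : (x, a) ∈ closure C) (hc : (x, c) ∈ closure C)
    (hab : a < b) (hbc : b < c) : (x, b) ∈ interior C := by
  rcases lt_trichotomy b r with hbr | rfl | hrb
  · refine hC.openSegment_closure_interior_subset_interior ha hr ?_
    rw [← Prod.image_mk_openSegment_right, openSegment_eq_Ioo (hab.trans hbr)]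
    exact ⟨b, ⟨hab, hbr⟩, rfl⟩
  · exact hr
  · refine hC.openSegment_interior_closure_subset_interior hr hc ?_
    rw [← Prod.image_mk_openSegment_right, openSegment_eq_Ioo (hrb.trans hbc)]
    exact ⟨b, ⟨hrb, hbc⟩, rfl⟩

lemma Set.ncard_le_two_of_forall_not_lt_lt {α : Type*} [LinearOrder α] {s : Set α}
    (h : ∀ a ∈ s, ∀ b ∈ s, ∀ c ∈ s, a < b → b < c → False) : s.ncard ≤ 2 := by
  by_contra! h2
  obtain ⟨a, b, c, ha, hb, hc, hab, hac, hbc⟩ :=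
    (two_lt_ncard_iff (finite_of_ncard_pos (by omega))).1 h2
  rcases hab.lt_or_gt with h1 | h1 <;> rcases hac.lt_or_gt with h2 | h2 <;>
    rcases hbc.lt_or_gt with h3 | h3 <;> grind

lemma Convex.ncard_column_frontier_le_two {C : Set (ℝ × ℝ)} (hC : Convex ℝ C) {t : ℤ} {r : ℝ}
    (hr : ((t : ℝ), r) ∈ interior C) : (column (frontier C) t).ncard ≤ 2 :=
  ncard_le_two_of_forall_not_lt_lt fun _ ha _ hb _ hc hab hbc =>
    hb.2 <| hC.mk_mem_interior_of_lt_of_lt hr ha.1 hc.1 (by exact_mod_cast hab)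
      (by exact_mod_cast hbc)

lemma interior_subset_Ioo_prod {S : Set (ℝ × ℝ)} {a b : ℝ} (h : S ⊆ Icc a b ×ˢ univ) :
    interior S ⊆ Ioo a b ×ˢ univ := by
  simpa only [interior_prod_eq, interior_Icc, interior_univ] using interior_mono h

lemma interior_inter_latt_eq_empty {S : Set (ℝ × ℝ)} {m : ℤ}
    (h : S ⊆ Icc (m : ℝ) (m + 1) ×ˢ univ) : interior S ∩ latt = ∅ := by
  refine eq_empty_of_forall_notMem ?_
  rintro _ ⟨hp, k, n, rfl⟩
  obtain ⟨hmk, hkm⟩ : (m : ℝ) < k ∧ (k : ℝ) < m + 1 := (interior_subset_Ioo_prod h hp).1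
  have : m < k := by exact_mod_cast hmk
  have : k < m + 1 := by exact_mod_cast hkm
  omega

lemma bcount_eq_ncard_column_add_ncard_column {Q : Set (ℝ × ℝ)} (hQc : IsCompact Q)
    (hstrip : Q ⊆ Icc 0 1 ×ˢ univ) : bcount Q = (column Q 0).ncard + (column Q 1).ncard := by
  have hnoint := interior_inter_latt_eq_empty (m := 0) (by simpa using hstrip)
  have hlatt : frontier Q ∩ latt = Q ∩ latt := by
    rw [hQc.isClosed.frontier_eq, sdiff_inter_right_comm, sdiff_eq_left]
    exact (disjoint_iff_inter_eq_empty.2 hnoint).symm.mono_left inter_subset_right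
  rw [bcount, hlatt, ncard_inter_latt_eq_sum_column (k := 1) (by simpa using hstrip)
    hQc.finite_inter_latt]
  simp [Finset.sum_range_succ]

theorem bcount_two_smul_le {Q : Set (ℝ × ℝ)} (hQ : Convex ℝ Q) (hQc : IsCompact Q)
    (hstrip : Q ⊆ Icc 0 1 ×ˢ univ) (hint : (interior ((2 : ℝ) • Q) ∩ latt).Nonempty) :
    bcount ((2 : ℝ) • Q) ≤ 2 * bcount Q + 4 := by
  have h2Q : (2 : ℝ) • Q ⊆ Icc 0 2 ×ˢ univ := by
    rintro _ ⟨p, hp, rfl⟩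
    obtain ⟨⟨h0, h1⟩, -⟩ := hstrip hp
    exact ⟨⟨by simp; linarith, by simp; linarith⟩, trivial⟩
  have h2Qc : IsCompact ((2 : ℝ) • Q) := hQc.smul 2
  have hfin2Q := h2Qc.finite_inter_latt
  have hF : frontier ((2 : ℝ) • Q) ⊆ (2 : ℝ) • Q := h2Qc.isClosed.frontier_subset
  have hbQ := bcount_eq_ncard_column_add_ncard_column hQc hstrip
  have hb2Q : bcount ((2 : ℝ) • Q) = (column (frontier ((2 : ℝ) • Q)) 0).ncard +
      (column (frontier ((2 : ℝ) • Q)) 1).ncard + (column (frontier ((2 : ℝ) • Q)) 2).ncard := by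
    rw [bcount, ncard_inter_latt_eq_sum_column (k := 2) (by simpa using hF.trans h2Q)
      (hfin2Q.subset (inter_subset_inter_left _ hF))]
    simp [Finset.sum_range_succ]
  have hcol0 : (column (frontier ((2 : ℝ) • Q)) 0).ncard ≤ 2 * (column Q 0).ncard + 1 :=
    (ncard_le_ncard (column_mono hF 0) (finite_column hfin2Q 0)).trans
      (hQ.ncard_column_two_smul_le 0)
  have hcol2 : (column (frontier ((2 : ℝ) • Q)) 2).ncard ≤ 2 * (column Q 1).ncard + 1 :=
    (ncard_le_ncard (column_mono hF 2) (finite_column hfin2Q 2)).trans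
      (hQ.ncard_column_two_smul_le 1)
  have hcol1 : (column (frontier ((2 : ℝ) • Q)) 1).ncard ≤ 2 := by
    obtain ⟨_, hr, m, n, rfl⟩ := hint
    obtain ⟨h0, h2⟩ : (0 : ℝ) < m ∧ (m : ℝ) < 2 := (interior_subset_Ioo_prod h2Q hr).1
    obtain rfl : m = 1 := by
      have : 0 < m := by exact_mod_cast h0
      have : m < 2 := by exact_mod_cast h2
      omega
    exact (hQ.smul 2).ncard_column_frontier_le_two hr
  omega

/-- an infinitely growable denominator 2 polygon (i.e. one equivalent to a
subset of the strip `[0,1] × ℝ`) has no interior lattice points, and if `2P` has an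
interior lattice point and `P` has a boundary lattice point then `b(2P) ≤ 2·b(P) + 4`. -/
theorem stmt_8 (P : Set (ℝ × ℝ)) (hP : IsDen2 P)
    (hstrip : ∃ f : ℝ × ℝ → ℝ × ℝ, Unimod f ∧
      f '' P ⊆ Set.Icc (0 : ℝ) 1 ×ˢ (Set.univ : Set ℝ)) :
    icount P = 0 ∧
    ((interior ((2 : ℝ) • P) ∩ latt).Nonempty → (frontier P ∩ latt).Nonempty →
      bcount ((2 : ℝ) • P) ≤ 2 * bcount P + 4) := by
  obtain ⟨⟨V, -, rfl⟩, -⟩ := hP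
  obtain ⟨f, hf, hfP⟩ := hstrip
  refine ⟨?_, fun hint _ => ?_⟩
  · rw [← hf.icount_image, icount, interior_inter_latt_eq_empty (m := 0) (by simpa using hfP),
      ncard_empty]
  obtain ⟨g, hg, hgf⟩ := hf.exists_image_two_smul
  have hconv := hf.convex_image (convex_convexHull ℝ (V : Set (ℝ × ℝ)))
  have hcomp := (V.finite_toSet.isCompact_convexHull (𝕜 := ℝ)).image hf.continuous
  have hint' : (interior ((2 : ℝ) • f '' convexHull ℝ V) ∩ latt).Nonempty := by
    rw [← hgf, ← hg.image_interior_inter_latt]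
    exact hint.image g
  calc bcount ((2 : ℝ) • convexHull ℝ (V : Set (ℝ × ℝ)))
      = bcount ((2 : ℝ) • f '' convexHull ℝ V) := by rw [← hgf, hg.bcount_image]
    _ ≤ 2 * bcount (f '' convexHull ℝ V) + 4 := bcount_two_smul_le hconv hcomp hfP hint'
    _ = 2 * bcount (convexHull ℝ (V : Set (ℝ × ℝ))) + 4 := by rw [hf.bcount_image]
end

section
/- For every integer i ≥ 1, the triangle P = conv((0,1/2), (1,1/2), (1/2,(i+2)/2)) is a denominator 2 polygon with b(P) = 0, i(P) = 0, b(2P) = 4 and i(2P) = i. -/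
open Set Pointwise

/-!
Both `2P` and `P` are isosceles triangles cut out by three half-planes: `2P` has base
`(0,1)–(2,1)` and apex `(1, i+2)`, and `P` is half of it. A lattice point `(m, n)` of `2P` off
the base satisfies `0 < (i+1) m` and `0 < (i+1)(2 - m)`, so it lies on the axis `m = 1`; hence
the boundary lattice points of `2P` are `(0,1), (2,1), (1,1), (1,i+2)` and the interior ones are
`(1,2), …, (1,i+1)`. A lattice point of `P` would need `n ≥ 1` and hence `0 < m < 1`.
-/

theorem mem_convexHull_triple {E : Type*} [AddCommGroup E] [Module ℝ E] {x y z p : E}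
    {a b c : ℝ} (ha : 0 ≤ a) (hb : 0 ≤ b) (hc : 0 ≤ c) (habc : a + b + c = 1)
    (hp : a • x + b • y + c • z = p) : p ∈ convexHull ℝ {x, y, z} := by
  have := (convex_convexHull ℝ ({x, y, z} : Set E)).sum_mem (t := Finset.univ)
    (w := ![a, b, c]) (z := ![x, y, z]) (by simp [Fin.forall_fin_succ, ha, hb, hc])
    (by simp [Fin.sum_univ_three, habc])
    fun i _ => subset_convexHull ℝ _ (by fin_cases i <;> simp)
  simpa [Fin.sum_univ_three, hp] using this

theorem exists_vertical_shifts_mem_of_mem_interior {S : Set (ℝ × ℝ)} {p : ℝ × ℝ}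
    (hp : p ∈ interior S) : ∃ ε > 0, (p.1, p.2 - ε) ∈ S ∧ (p.1, p.2 + ε) ∈ S := by
  obtain ⟨ε, hε, hball⟩ := Metric.mem_nhds_iff.1 (mem_interior_iff_mem_nhds.1 hp)
  refine ⟨ε / 2, by positivity, hball ?_, hball ?_⟩ <;>
    simp [Prod.dist_eq, abs_of_pos hε, hε]

/-- Base `(0, b)`–`(2w, b)`, apex `(w, b + k w)`. -/
def isoscelesTriangle (b w k : ℝ) : Set (ℝ × ℝ) :=
  {p | b ≤ p.2 ∧ p.2 ≤ b + k * p.1 ∧ p.2 ≤ b + k * (2 * w - p.1)}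

def openIsoscelesTriangle (b w k : ℝ) : Set (ℝ × ℝ) :=
  {p | b < p.2 ∧ p.2 < b + k * p.1 ∧ p.2 < b + k * (2 * w - p.1)}

section Triangle

variable (b w k : ℝ)

theorem isClosed_isoscelesTriangle : IsClosed (isoscelesTriangle b w k) :=
  (isClosed_le continuous_const continuous_snd).inter <|
    (isClosed_le continuous_snd (by fun_prop)).inter (isClosed_le continuous_snd (by fun_prop))

theorem isOpen_openIsoscelesTriangle : IsOpen (openIsoscelesTriangle b w k) :=
  (isOpen_lt continuous_const continuous_snd).inter <|
    (isOpen_lt continuous_snd (by fun_prop)).inter (isOpen_lt continuous_snd (by fun_prop))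

theorem convex_isoscelesTriangle : Convex ℝ (isoscelesTriangle b w k) := by
  rintro p ⟨hp₁, hp₂, hp₃⟩ q ⟨hq₁, hq₂, hq₃⟩ s t hs ht hst
  obtain rfl : t = 1 - s := by linarith
  refine ⟨?_, ?_, ?_⟩ <;>
    simp only [Prod.snd_add, Prod.fst_add, Prod.smul_snd, Prod.smul_fst, smul_eq_mul] <;>
    nlinarith [mul_le_mul_of_nonneg_left hp₁ hs, mul_le_mul_of_nonneg_left hp₂ hs,
      mul_le_mul_of_nonneg_left hp₃ hs, mul_le_mul_of_nonneg_left hq₁ ht,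
      mul_le_mul_of_nonneg_left hq₂ ht, mul_le_mul_of_nonneg_left hq₃ ht]

theorem interior_isoscelesTriangle :
    interior (isoscelesTriangle b w k) = openIsoscelesTriangle b w k := by
  refine subset_antisymm (fun p hp => ?_) (interior_maximal
    (fun p hp => ⟨hp.1.le, hp.2.1.le, hp.2.2.le⟩) (isOpen_openIsoscelesTriangle b w k))
  obtain ⟨ε, hε, ⟨h₁, -⟩, ⟨-, h₂, h₃⟩⟩ := exists_vertical_shifts_mem_of_mem_interior hp
  exact ⟨by linarith, by linarith, by linarith⟩

theorem frontier_isoscelesTriangle : frontier (isoscelesTriangle b w k) =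
    isoscelesTriangle b w k \ openIsoscelesTriangle b w k := by
  rw [(isClosed_isoscelesTriangle b w k).frontier_eq, interior_isoscelesTriangle]

end Triangle

theorem isoscelesTriangle_subset_convexHull {b w k : ℝ} (hw : 0 < w) (hk : 0 < k) :
    isoscelesTriangle b w k ⊆ convexHull ℝ {(0, b), (2 * w, b), (w, b + k * w)} := by
  rintro ⟨x, y⟩ ⟨h₁, h₂, h₃⟩
  dsimp only at h₁ h₂ h₃
  set c := (y - b) / (k * w)
  set β := (x - c * w) / (2 * w)
  have hc : c * (k * w) = y - b := div_mul_cancel₀ _ (by positivity)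
  have hβ : β * (2 * w) = x - c * w := div_mul_cancel₀ _ (by positivity)
  clear_value c β
  have hcx : c * w ≤ x := le_of_mul_le_mul_left (by nlinarith) hk
  have hcx' : c * w ≤ 2 * w - x := le_of_mul_le_mul_left (by nlinarith) hk
  refine mem_convexHull_triple (a := 1 - β - c) (b := β) (c := c) ?_ ?_ ?_ (by ring) ?_
  · nlinarith
  · nlinarith
  · nlinarith [mul_pos hk hw]
  · ext
    · simp only [Prod.fst_add, Prod.smul_fst, smul_eq_mul]
      linear_combination hβ
    · simp only [Prod.snd_add, Prod.smul_snd, smul_eq_mul]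
      linear_combination hc

theorem convexHull_eq_isoscelesTriangle {b w k : ℝ} (hw : 0 < w) (hk : 0 < k) :
    convexHull ℝ {(0, b), (2 * w, b), (w, b + k * w)} = isoscelesTriangle b w k := by
  refine (convexHull_min ?_ (convex_isoscelesTriangle b w k)).antisymm
    (isoscelesTriangle_subset_convexHull hw hk)
  rintro p (rfl | rfl | rfl) <;> refine ⟨?_, ?_, ?_⟩ <;> dsimp only <;> nlinarith

theorem interior_isoscelesTriangle_nonempty {b w k : ℝ} (hw : 0 < w) (hk : 0 < k) :
    (interior (isoscelesTriangle b w k)).Nonempty := by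
  rw [interior_isoscelesTriangle]
  exact ⟨(w, b + k * w / 2), by dsimp only; nlinarith, by dsimp only; nlinarith,
    by dsimp only; nlinarith⟩

def latticePoint (z : ℤ × ℤ) : ℝ × ℝ := ((z.1 : ℝ), (z.2 : ℝ))

theorem latticePoint_injective : Function.Injective latticePoint := by
  rintro ⟨m, n⟩ ⟨m', n'⟩ h
  simpa [latticePoint] using h

theorem range_latticePoint : range latticePoint = latt := by
  ext p
  simp [latticePoint, latt, eq_comm]

theorem ncard_inter_latt (S : Set (ℝ × ℝ)) :
    (S ∩ latt).ncard = (latticePoint ⁻¹' S).ncard := by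
  rw [← range_latticePoint, ← image_preimage_eq_inter_range,
    ncard_image_of_injective _ latticePoint_injective]

theorem isoscelesTriangle_half_inter_latt (k : ℝ) :
    isoscelesTriangle (1 / 2) (1 / 2) k ∩ latt = ∅ := by
  rw [← range_latticePoint, ← image_preimage_eq_inter_range, image_eq_empty,
    eq_empty_iff_forall_notMem]
  rintro ⟨m, n⟩ ⟨h₁, h₂, h₃⟩
  simp only [latticePoint] at h₁ h₂ h₃
  have hn : (0 : ℤ) < n := by exact_mod_cast (by linarith : (0 : ℝ) < n)
  have hn' : (1 : ℝ) ≤ n := by exact_mod_cast hn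
  have hk : 0 < k := by nlinarith
  have hm : (0 : ℝ) < m := pos_of_mul_pos_right (by linarith) hk.le
  have hm' : (m : ℝ) < 1 := by nlinarith
  norm_cast at hm hm'
  omega

theorem bcount_isoscelesTriangle_half (k : ℝ) :
    bcount (isoscelesTriangle (1 / 2) (1 / 2) k) = 0 := by
  rw [bcount, subset_eq_empty (inter_subset_inter_left _
    (isClosed_isoscelesTriangle _ _ k).frontier_subset) (isoscelesTriangle_half_inter_latt k),
    ncard_empty]

theorem icount_isoscelesTriangle_half (k : ℝ) :
    icount (isoscelesTriangle (1 / 2) (1 / 2) k) = 0 := by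
  rw [icount, subset_eq_empty (inter_subset_inter_left _ interior_subset)
    (isoscelesTriangle_half_inter_latt k), ncard_empty]

theorem latticePoint_preimage_openIsoscelesTriangle_one (k : ℤ) :
    latticePoint ⁻¹' openIsoscelesTriangle 1 1 k = {1} ×ˢ Ioo 1 (1 + k) := by
  ext ⟨m, n⟩
  simp only [mem_preimage, latticePoint, openIsoscelesTriangle, mem_ofPred_eq, mul_one, mem_prod,
    mem_singleton_iff, mem_Ioo]
  norm_cast
  constructor
  · rintro ⟨h₁, h₂, h₃⟩
    have hk : 0 < k := by nlinarith
    have hm : 0 < m := pos_of_mul_pos_right (by linarith) hk.le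
    have hm' : 0 < 2 - m := pos_of_mul_pos_right (by linarith) hk.le
    obtain rfl : m = 1 := by omega
    omega
  · rintro ⟨rfl, h₁, h₂⟩
    omega

theorem latticePoint_preimage_frontier_isoscelesTriangle_one {k : ℤ} (hk : 0 < k) :
    latticePoint ⁻¹' frontier (isoscelesTriangle 1 1 k) =
      {(0, 1), (2, 1), (1, 1), (1, 1 + k)} := by
  rw [frontier_isoscelesTriangle, preimage_sdiff, latticePoint_preimage_openIsoscelesTriangle_one]
  ext ⟨m, n⟩
  simp only [mem_sdiff, mem_preimage, latticePoint, isoscelesTriangle, mem_ofPred_eq, mul_one,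
    mem_prod, mem_singleton_iff, mem_Ioo, mem_insert_iff, Prod.mk.injEq]
  norm_cast
  constructor
  · rintro ⟨⟨h₁, h₂, h₃⟩, h⟩
    have hm : 0 ≤ m := nonneg_of_mul_nonneg_right (by linarith) hk
    have hm' : 0 ≤ 2 - m := nonneg_of_mul_nonneg_right (by linarith) hk
    have hm₂ : m ≤ 2 := by omega
    interval_cases m <;> simp at * <;> omega
  · rintro (⟨rfl, rfl⟩ | ⟨rfl, rfl⟩ | ⟨rfl, rfl⟩ | ⟨rfl, rfl⟩) <;> simp <;> omega

theorem bcount_isoscelesTriangle_one {k : ℤ} (hk : 0 < k) :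
    bcount (isoscelesTriangle 1 1 k) = 4 := by
  rw [bcount, ncard_inter_latt, latticePoint_preimage_frontier_isoscelesTriangle_one hk,
    ncard_insert_of_notMem, ncard_insert_of_notMem, ncard_pair] <;> simp
  omega

theorem icount_isoscelesTriangle_one (k : ℤ) :
    icount (isoscelesTriangle 1 1 k) = (k - 1).toNat := by
  rw [icount, ncard_inter_latt, interior_isoscelesTriangle,
    latticePoint_preimage_openIsoscelesTriangle_one,
    ncard_prod, ncard_singleton, one_mul, ← Finset.coe_Ioo, ncard_coe_finset, Int.card_Ioo]
  congr 1
  ring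

/-- the triangle `conv((0,1/2),(1,1/2),(1/2,(i+2)/2))` is a denominator 2
polygon with `b(P) = 0`, `i(P) = 0`, `b(2P) = 4` and `i(2P) = i`, for every integer
`i ≥ 1`. -/
theorem stmt_10 (i : ℤ) (hi : 1 ≤ i) (P : Set (ℝ × ℝ))
    (hP : P = convexHull ℝ
      {((0 : ℝ), 1 / 2), ((1 : ℝ), 1 / 2), ((1 / 2 : ℝ), ((i : ℝ) + 2) / 2)}) :
    IsDen2 P ∧ bcount P = 0 ∧ icount P = 0 ∧
      bcount ((2 : ℝ) • P) = 4 ∧ (icount ((2 : ℝ) • P) : ℤ) = i := by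
  have hk : (0 : ℝ) < (i + 1 : ℤ) := Int.cast_pos.2 (by omega)
  have hP' : P = isoscelesTriangle (1 / 2) (1 / 2) (i + 1 : ℤ) := by
    rw [hP, ← convexHull_eq_isoscelesTriangle (by norm_num) hk]
    congr 3 <;> norm_num
    ring
  have h2P : (2 : ℝ) • P = isoscelesTriangle 1 1 (i + 1 : ℤ) := by
    rw [hP, ← convexHull_smul, ← convexHull_eq_isoscelesTriangle one_pos hk]
    simp only [smul_set_insert, smul_set_singleton, Prod.smul_mk, smul_eq_mul]
    congr 3 <;> norm_num
    ring
  refine ⟨⟨⟨{(0, 1 / 2), (1, 1 / 2), (1 / 2, ((i : ℝ) + 2) / 2)}, ?_, by rw [hP]; simp⟩,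
    hP' ▸ interior_isoscelesTriangle_nonempty (by norm_num) hk⟩,
    hP' ▸ bcount_isoscelesTriangle_half _, hP' ▸ icount_isoscelesTriangle_half _,
    h2P ▸ bcount_isoscelesTriangle_one (by omega), ?_⟩
  · simp only [Finset.mem_insert, Finset.mem_singleton]
    rintro v (rfl | rfl | rfl)
    · exact ⟨0, 1, by norm_num⟩
    · exact ⟨2, 1, by norm_num⟩
    · exact ⟨1, i + 2, by simp [Prod.ext_iff]; ring⟩
  · rw [h2P, icount_isoscelesTriangle_one, add_sub_cancel_right, Int.toNat_of_nonneg (by omega)]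
end

section
/- For every integer i ≥ 1, the triangle P = conv((0,0), (1,1/2), (1/2,(i+1)/2)) is a denominator 2 polygon with b(P) = 1, i(P) = 0, b(2P) = 3 and i(2P) = i. -/
open Set Pointwise

/-!
The doubled triangle `2P = conv((0,0), (2,1), (1,i+1))` is the intersection of the half-planes
`x ≤ 2y`, `y ≤ (i+1)x` and `ix + y ≤ 2i+1`. For an integer point these force `0 ≤ x ≤ 2`, which
leaves the vertices `(0,0)`, `(2,1)` and the column `x = 1`, `1 ≤ y ≤ i+1`, whose points with
`y ≤ i` are interior. The lattice points of `P` are the halves of the lattice points of `2P` with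
both coordinates even, and only the origin qualifies.
-/

theorem frontier_smul₀ {G₀ α : Type*} [GroupWithZero G₀] [MulAction G₀ α] [TopologicalSpace α]
    [ContinuousConstSMul G₀ α] {c : G₀} (hc : c ≠ 0) (s : Set α) :
    frontier (c • s) = c • frontier s :=
  ((Homeomorph.smulOfNeZero c hc).image_frontier s).symm

theorem add_smul_add_smul_mem_convexHull {E : Type*} [AddCommGroup E] [Module ℝ E] {u v w : E}
    {a b c : ℝ} (ha : 0 ≤ a) (hb : 0 ≤ b) (hc : 0 ≤ c) (habc : a + b + c = 1) :
    a • u + b • v + c • w ∈ convexHull ℝ {u, v, w} := by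
  have := (convex_convexHull ℝ {u, v, w}).sum_mem (t := Finset.univ) (w := ![a, b, c])
    (z := ![u, v, w]) (by simp [Fin.forall_fin_succ, ha, hb, hc])
    (by simpa [Fin.sum_univ_three] using habc)
    (fun j _ => subset_convexHull ℝ _ (by fin_cases j <;> simp))
  simpa [Fin.sum_univ_three] using this

def halfPlane (a b c : ℝ) : Set (ℝ × ℝ) := {p | a * p.1 + b * p.2 ≤ c}

theorem convex_halfPlane (a b c : ℝ) : Convex ℝ (halfPlane a b c) :=
  convex_halfSpace_le
    ⟨fun p q => by simp only [Prod.fst_add, Prod.snd_add]; ring,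
      fun t p => by simp only [Prod.smul_fst, Prod.smul_snd, smul_eq_mul]; ring⟩ c

theorem interior_halfPlane {a b : ℝ} (hab : a ≠ 0 ∨ b ≠ 0) (c : ℝ) :
    interior (halfPlane a b c) = {p | a * p.1 + b * p.2 < c} := by
  let f : (ℝ × ℝ) →L[ℝ] ℝ := a • ContinuousLinearMap.fst ℝ ℝ ℝ + b • ContinuousLinearMap.snd ℝ ℝ ℝ
  have hf : ∀ p, f p = a * p.1 + b * p.2 := fun p => by simp [f]
  have hsurj : Function.Surjective f := by
    intro y
    rcases hab with ha | hb
    · exact ⟨(y / a, 0), by simp [hf, mul_div_cancel₀ y ha]⟩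
    · exact ⟨(0, y / b), by simp [hf, mul_div_cancel₀ y hb]⟩
  have hpre : halfPlane a b c = f ⁻¹' Iic c := by ext p; simp [halfPlane, hf]
  rw [hpre, f.interior_preimage hsurj, interior_Iic]
  ext p; simp [hf]

def triangle (r : ℝ) : Set (ℝ × ℝ) :=
  convexHull ℝ {((0 : ℝ), (0 : ℝ)), ((2 : ℝ), (1 : ℝ)), ((1 : ℝ), r + 1)}

theorem triangle_eq_inter_halfPlane {r : ℝ} (hr : 0 < 2 * r + 1) :
    triangle r =
      halfPlane 1 (-2) 0 ∩ halfPlane (-(r + 1)) 1 0 ∩ halfPlane r 1 (2 * r + 1) := by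
  apply Subset.antisymm
  · refine convexHull_min ?_ (((convex_halfPlane _ _ _).inter (convex_halfPlane _ _ _)).inter
      (convex_halfPlane _ _ _))
    rintro p (rfl | rfl | rfl) <;> simp only [halfPlane, mem_inter_iff, mem_ofPred_eq] <;>
      refine ⟨⟨?_, ?_⟩, ?_⟩ <;> linarith
  · rintro p ⟨⟨h₁, h₂⟩, h₃⟩
    simp only [halfPlane, mem_ofPred_eq] at h₁ h₂ h₃
    -- barycentric coordinates of `p` with respect to the vertices `(2, 1)` and `(1, r + 1)`
    set b := ((r + 1) * p.1 - p.2) / (2 * r + 1)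
    set c := (2 * p.2 - p.1) / (2 * r + 1)
    have hd : (2 * r + 1) * (2 * r + 1)⁻¹ = 1 := mul_inv_cancel₀ hr.ne'
    have hp : (1 - b - c) • ((0 : ℝ), (0 : ℝ)) + b • ((2 : ℝ), (1 : ℝ)) + c • ((1 : ℝ), r + 1)
        = p := by
      ext
      · simp only [b, c, Prod.fst_add, Prod.smul_fst, smul_eq_mul]
        linear_combination p.1 * hd
      · simp only [b, c, Prod.snd_add, Prod.smul_snd, smul_eq_mul]
        linear_combination p.2 * hd
    rw [← hp]
    apply add_smul_add_smul_mem_convexHull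
    · rw [sub_sub, sub_nonneg, ← add_div, div_le_one hr]; linarith
    · exact div_nonneg (by linarith) hr.le
    · exact div_nonneg (by linarith) hr.le
    · ring

theorem int_triangle_ineqs_iff {i m n : ℤ} (hi : 0 ≤ i) :
    (m ≤ 2 * n ∧ n ≤ (i + 1) * m) ∧ i * m + n ≤ 2 * i + 1 ↔
      m = 0 ∧ n = 0 ∨ m = 2 ∧ n = 1 ∨ m = 1 ∧ 1 ≤ n ∧ n ≤ i + 1 := by
  constructor
  · rintro ⟨⟨h₁, h₂⟩, h₃⟩
    have hm₀ : 0 ≤ m := by nlinarith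
    have hm₂ : m ≤ 2 := by nlinarith
    interval_cases m <;> omega
  · rintro (⟨rfl, rfl⟩ | ⟨rfl, rfl⟩ | ⟨rfl, h₁, h₂⟩) <;> omega

theorem int_triangle_strict_ineqs_iff {i m n : ℤ} (hi : 0 ≤ i) :
    (m < 2 * n ∧ n < (i + 1) * m) ∧ i * m + n < 2 * i + 1 ↔ m = 1 ∧ 1 ≤ n ∧ n ≤ i := by
  constructor
  · rintro ⟨⟨h₁, h₂⟩, h₃⟩
    rcases (int_triangle_ineqs_iff hi).1 ⟨⟨h₁.le, h₂.le⟩, h₃.le⟩ with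
      ⟨rfl, rfl⟩ | ⟨rfl, rfl⟩ | ⟨rfl, -⟩ <;> omega
  · rintro ⟨rfl, h₁, h₂⟩
    omega

theorem interior_triangle {r : ℝ} (hr : 0 < 2 * r + 1) :
    interior (triangle r) = {p : ℝ × ℝ | 1 * p.1 + -2 * p.2 < 0} ∩
      {p | -(r + 1) * p.1 + 1 * p.2 < 0} ∩ {p | r * p.1 + 1 * p.2 < 2 * r + 1} := by
  rw [triangle_eq_inter_halfPlane hr, interior_inter, interior_inter,
    interior_halfPlane (Or.inl one_ne_zero), interior_halfPlane (Or.inr one_ne_zero),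
    interior_halfPlane (Or.inr one_ne_zero)]

theorem interior_triangle_nonempty {r : ℝ} (hr : 0 < 2 * r + 1) :
    (interior (triangle r)).Nonempty := by
  refine ⟨(1, (r + 2) / 3), ?_⟩
  rw [interior_triangle hr]
  refine ⟨⟨?_, ?_⟩, ?_⟩ <;> simp only [mem_ofPred_eq] <;> linarith

theorem intCast_mem_triangle_iff {i : ℤ} (hi : 0 ≤ i) (m n : ℤ) :
    ((m : ℝ), (n : ℝ)) ∈ triangle i ↔
      m = 0 ∧ n = 0 ∨ m = 2 ∧ n = 1 ∨ m = 1 ∧ 1 ≤ n ∧ n ≤ i + 1 := by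
  have hi' : (0 : ℝ) ≤ i := by exact_mod_cast hi
  rw [triangle_eq_inter_halfPlane (by linarith), ← int_triangle_ineqs_iff hi]
  simp only [halfPlane, mem_inter_iff, mem_ofPred_eq, one_mul, neg_mul, neg_add_nonpos_iff,
    add_neg_nonpos_iff]
  norm_cast

theorem intCast_mem_interior_triangle_iff {i : ℤ} (hi : 0 ≤ i) (m n : ℤ) :
    ((m : ℝ), (n : ℝ)) ∈ interior (triangle i) ↔ m = 1 ∧ 1 ≤ n ∧ n ≤ i := by
  have hi' : (0 : ℝ) ≤ i := by exact_mod_cast hi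
  rw [interior_triangle (by linarith), ← int_triangle_strict_ineqs_iff hi]
  simp only [mem_inter_iff, mem_ofPred_eq, one_mul, neg_mul, neg_add_neg_iff, add_neg_neg_iff]
  norm_cast

theorem intCast_mem_frontier_triangle_iff {i : ℤ} (hi : 0 ≤ i) (m n : ℤ) :
    ((m : ℝ), (n : ℝ)) ∈ frontier (triangle i) ↔
      m = 0 ∧ n = 0 ∨ m = 2 ∧ n = 1 ∨ m = 1 ∧ n = i + 1 := by
  have hclosed : IsClosed (triangle i) := ((toFinite _).isCompact_convexHull (𝕜 := ℝ)).isClosed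
  rw [hclosed.frontier_eq, mem_sdiff, intCast_mem_triangle_iff hi,
    intCast_mem_interior_triangle_iff hi]
  omega

theorem ncard_inter_latt_s11 (S : Set (ℝ × ℝ)) :
    (S ∩ latt).ncard = {z : ℤ × ℤ | ((z.1 : ℝ), (z.2 : ℝ)) ∈ S}.ncard := by
  have hinj : Function.Injective fun z : ℤ × ℤ => ((z.1 : ℝ), (z.2 : ℝ)) := by
    rintro ⟨a, b⟩ ⟨c, d⟩ h
    simpa using h
  rw [← ncard_image_of_injective _ hinj]
  congr 1
  ext p
  simp only [latt, mem_inter_iff, mem_ofPred_eq, mem_image, Prod.exists]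
  constructor
  · rintro ⟨hp, m, n, rfl⟩
    exact ⟨m, n, hp, rfl⟩
  · rintro ⟨m, n, hp, rfl⟩
    exact ⟨hp, m, n, rfl⟩

theorem intCast_mem_inv_smul_iff {c : ℤ} (hc : c ≠ 0) (S : Set (ℝ × ℝ)) (m n : ℤ) :
    ((m : ℝ), (n : ℝ)) ∈ (c : ℝ)⁻¹ • S ↔ (((c * m : ℤ) : ℝ), ((c * n : ℤ) : ℝ)) ∈ S := by
  have : (((c * m : ℤ) : ℝ), ((c * n : ℤ) : ℝ)) = (c : ℝ) • ((m : ℝ), (n : ℝ)) := by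
    ext <;> simp
  rw [this, mem_inv_smul_set_iff₀ (Int.cast_ne_zero.2 hc)]

theorem isDen2_inv_two_smul_convexHull (V : Finset (ℝ × ℝ)) (hV : (V : Set (ℝ × ℝ)) ⊆ latt)
    (hint : (interior (convexHull ℝ (V : Set (ℝ × ℝ)))).Nonempty) :
    IsDen2 ((2 : ℝ)⁻¹ • convexHull ℝ (V : Set (ℝ × ℝ))) := by
  refine ⟨⟨V.image ((2 : ℝ)⁻¹ • ·), ?_, ?_⟩, ?_⟩
  · simp only [Finset.mem_image]
    rintro _ ⟨v, hv, rfl⟩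
    simpa [smul_inv_smul₀] using hV hv
  · rw [Finset.coe_image, image_smul, convexHull_smul]
  · rw [interior_smul₀ (by norm_num)]
    exact hint.smul_set

theorem isDen2_inv_two_smul_triangle {i : ℤ} (hi : 0 ≤ i) :
    IsDen2 ((2 : ℝ)⁻¹ • triangle i) := by
  have hi' : (0 : ℝ) ≤ i := by exact_mod_cast hi
  have hT : triangle i = convexHull ℝ
      ((({((0 : ℝ), (0 : ℝ)), ((2 : ℝ), (1 : ℝ)), ((1 : ℝ), (i : ℝ) + 1)} : Finset _)) :
        Set (ℝ × ℝ)) := by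
    simp [triangle]
  rw [hT]
  apply isDen2_inv_two_smul_convexHull
  · intro v hv
    simp only [Finset.coe_insert, Finset.coe_singleton, mem_insert_iff, mem_singleton_iff] at hv
    rcases hv with rfl | rfl | rfl
    · exact ⟨0, 0, by simp⟩
    · exact ⟨2, 1, by simp⟩
    · exact ⟨1, i + 1, by simp⟩
  · rw [← hT]
    exact interior_triangle_nonempty (by linarith)

theorem bcount_triangle {i : ℤ} (hi : 0 ≤ i) : bcount (triangle i) = 3 := by
  rw [bcount, ncard_inter_latt_s11, ncard_eq_three]
  refine ⟨(0, 0), (2, 1), (1, i + 1), by simp, by simp, by simp, ?_⟩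
  ext ⟨m, n⟩
  simp only [mem_ofPred_eq, mem_insert_iff, mem_singleton_iff, Prod.mk.injEq]
  exact intCast_mem_frontier_triangle_iff hi m n

theorem icount_triangle {i : ℤ} (hi : 0 ≤ i) : (icount (triangle i) : ℤ) = i := by
  have hint : {z : ℤ × ℤ | ((z.1 : ℝ), (z.2 : ℝ)) ∈ interior (triangle i)} = {1} ×ˢ Icc 1 i := by
    ext ⟨m, n⟩
    simp [intCast_mem_interior_triangle_iff hi]
  rw [icount, ncard_inter_latt_s11, hint, ncard_prod, ncard_singleton, one_mul, ← Finset.coe_Icc,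
    ncard_coe_finset]
  simpa using Int.card_Icc_of_le (a := 1) (b := i) (by omega)

theorem bcount_inv_two_smul_triangle {i : ℤ} (hi : 0 ≤ i) :
    bcount ((2 : ℝ)⁻¹ • triangle i) = 1 := by
  rw [bcount, frontier_smul₀ (by norm_num), ncard_inter_latt_s11, ncard_eq_one]
  refine ⟨(0, 0), ?_⟩
  ext ⟨m, n⟩
  simp only [mem_ofPred_eq, mem_singleton_iff, Prod.mk.injEq]
  rw [← Int.cast_two, intCast_mem_inv_smul_iff two_ne_zero, intCast_mem_frontier_triangle_iff hi]
  omega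

theorem icount_inv_two_smul_triangle {i : ℤ} (hi : 0 ≤ i) :
    icount ((2 : ℝ)⁻¹ • triangle i) = 0 := by
  rw [icount, interior_smul₀ (by norm_num), ncard_inter_latt_s11]
  convert ncard_empty (ℤ × ℤ)
  ext ⟨m, n⟩
  simp only [mem_ofPred_eq, mem_empty_iff_false, iff_false]
  rw [← Int.cast_two, intCast_mem_inv_smul_iff two_ne_zero, intCast_mem_interior_triangle_iff hi]
  omega

/-- the triangle `conv((0,0),(1,1/2),(1/2,(i+1)/2))` is a denominator 2
polygon with `b(P) = 1`, `i(P) = 0`, `b(2P) = 3` and `i(2P) = i`, for every integer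
`i ≥ 1`. -/
theorem stmt_11 (i : ℤ) (hi : 1 ≤ i) (P : Set (ℝ × ℝ))
    (hP : P = convexHull ℝ
      {((0 : ℝ), (0 : ℝ)), ((1 : ℝ), 1 / 2), ((1 / 2 : ℝ), ((i : ℝ) + 1) / 2)}) :
    IsDen2 P ∧ bcount P = 1 ∧ icount P = 0 ∧
      bcount ((2 : ℝ) • P) = 3 ∧ (icount ((2 : ℝ) • P) : ℤ) = i := by
  have hi₀ : 0 ≤ i := by omega
  have hP' : P = (2 : ℝ)⁻¹ • triangle i := by
    rw [hP, triangle, ← convexHull_smul, smul_set_insert, smul_set_insert, smul_set_singleton]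
    norm_num
    ring_nf
  have h2P : (2 : ℝ) • P = triangle i := by rw [hP', smul_inv_smul₀ two_ne_zero]
  rw [h2P, hP']
  exact ⟨isDen2_inv_two_smul_triangle hi₀, bcount_inv_two_smul_triangle hi₀,
    icount_inv_two_smul_triangle hi₀, bcount_triangle hi₀, icount_triangle hi₀⟩
end

section
/- Let P be a polytope in L_ℝ with vertices in a lattice L, and suppose P is infinitely growable with respect to a full-rank sublattice K ⊆ L (i.e. there is an infinite strictly increasing chain P = P₀ ⊊ P₁ ⊊ P₂ ⊊ … of L-polytopes all with |Pᵢ ∩ K| = |P ∩ K|). Then P contains no point of K in its interior. -/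
/-!
The union `U` of the chain is convex, it meets `K` only in `P ∩ K`, and it is unbounded, since a
bounded region contains only finitely many `L`-polytopes. If `x ∈ interior P` were a point of `K`,
Dirichlet approximation along a recession direction of `U` would produce points of `K ∩ U` of
arbitrarily large norm.
-/

open Set Filter Topology Bornology Submodule

theorem Set.iUnion_inter_eq_of_ncard_inter_eq {α : Type*} {s : ℕ → Set α} {t : Set α}
    (hs : Monotone s) (hfin : ∀ i, (s i ∩ t).Finite)
    (hcard : ∀ i, (s i ∩ t).ncard = (s 0 ∩ t).ncard) :
    (⋃ i, s i) ∩ t = s 0 ∩ t := by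
  have hconst (i : ℕ) : s i ∩ t = s 0 ∩ t :=
    (eq_of_subset_of_ncard_le (inter_subset_inter_left t (hs (Nat.zero_le i)))
      (hcard i).le (hfin i)).symm
  simp only [iUnion_inter, hconst, iUnion_const]

section Recession

variable {E : Type*} [NormedAddCommGroup E] [NormedSpace ℝ E]

/-- Far points of `U` seen from `x` have directions accumulating at some unit vector `v`,
and convexity puts the whole ray `x + ℝ≥0 • v` into the closure of `U`. -/
theorem Convex.exists_norm_eq_one_ray_subset_closure [FiniteDimensional ℝ E] {U : Set E}
    (hU : Convex ℝ U) (hunb : ¬ IsBounded U) {x : E} (hx : x ∈ U) :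
    ∃ v : E, ‖v‖ = 1 ∧ ∀ t : ℝ, 0 ≤ t → x + t • v ∈ closure U := by
  have hfar (n : ℕ) : ∃ y ∈ U, (n : ℝ) < ‖y - x‖ := by
    by_contra! h
    exact hunb ((Metric.isBounded_closedBall (x := x) (r := n)).subset
      fun y hy => by simpa [dist_eq_norm] using h y hy)
  choose y hyU hyfar using hfar
  have hpos (n : ℕ) : 0 < ‖y n - x‖ := (Nat.cast_nonneg n).trans_lt (hyfar n)
  set u : ℕ → E := fun n => ‖y n - x‖⁻¹ • (y n - x)
  have hu (n : ℕ) : u n ∈ Metric.sphere (0 : E) 1 := by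
    simp [u, norm_smul, (hpos n).ne']
  obtain ⟨v, hv, φ, hφ, hlim⟩ := (isCompact_sphere (0 : E) 1).tendsto_subseq hu
  refine ⟨v, by simpa using hv, fun t ht => mem_closure_of_tendsto
    ((hlim.const_smul t).const_add x) ?_⟩
  filter_upwards [hφ.tendsto_atTop.eventually_ge_atTop ⌈t⌉₊] with k hk
  have hts : t ≤ ‖y (φ k) - x‖ :=
    (Nat.le_ceil t).trans ((Nat.cast_le.mpr hk).trans (hyfar (φ k)).le)
  have hseg := hU.add_smul_sub_mem hx (hyU (φ k))
    ⟨div_nonneg ht (hpos _).le, (div_le_one (hpos _)).mpr hts⟩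
  simpa [u, smul_smul, div_eq_mul_inv] using hseg

end Recession

namespace ZSpan

variable {E ι : Type*} [NormedAddCommGroup E] [NormedSpace ℝ E] [Finite ι]
  (b : Module.Basis ι ℝ E)

/-- Dirichlet approximation: the fractional parts of `q • v`, `q ∈ ℕ`, lie in the bounded
fundamental domain, so two of them with indices at least `T` apart are `ε`-close. -/
theorem exists_natCast_smul_near (v : E) (T : ℕ) {ε : ℝ} (hε : 0 < ε) :
    ∃ t : ℕ, T ≤ t ∧ ∃ z ∈ span ℤ (range b), ‖(t : ℝ) • v - z‖ < ε := by
  cases nonempty_fintype ι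
  have := b.finiteDimensional_of_finite
  obtain ⟨p, -, ψ, hψ, hlim⟩ := tendsto_subseq_of_bounded (fundamentalDomain_isBounded b)
    fun q : ℕ => fract_mem_fundamentalDomain b ((q : ℝ) • v)
  obtain ⟨N, hN⟩ := Metric.tendsto_atTop.mp hlim (ε / 2) (half_pos hε)
  set q₁ := ψ N
  set q₂ := ψ (T + N)
  have hgap : T + q₁ ≤ q₂ := hψ.add_le_nat T N
  refine ⟨q₂ - q₁, by omega,
    (floor b ((q₂ : ℝ) • v) : E) - floor b ((q₁ : ℝ) • v), sub_mem (coe_mem _) (coe_mem _), ?_⟩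
  have hdiff : ((q₂ - q₁ : ℕ) : ℝ) • v - ((floor b ((q₂ : ℝ) • v) : E) - floor b ((q₁ : ℝ) • v))
      = fract b ((q₂ : ℝ) • v) - fract b ((q₁ : ℝ) • v) := by
    rw [Nat.cast_sub (by omega), fract_apply, fract_apply, sub_smul]
    abel
  rw [hdiff, ← dist_eq_norm]
  calc dist (fract b ((q₂ : ℝ) • v)) (fract b ((q₁ : ℝ) • v))
      ≤ dist (fract b ((q₂ : ℝ) • v)) p + dist (fract b ((q₁ : ℝ) • v)) p :=
        dist_triangle_right _ _ _
    _ < ε / 2 + ε / 2 := add_lt_add (hN _ (Nat.le_add_left N T)) (hN _ le_rfl)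
    _ = ε := add_halves ε

/-- `x + z` is the midpoint of `x + 2t • v ∈ closure U` and `x + 2 • (z - t • v)`, which lies in
`interior U` once the lattice point `z` is close enough to `t • v`. -/
theorem not_isBounded_inter_span_of_mem_interior {U : Set E} (hU : Convex ℝ U)
    (hunb : ¬ IsBounded U) {x : E} (hx : x ∈ interior U) (hxb : x ∈ span ℤ (range b)) :
    ¬ IsBounded (U ∩ span ℤ (range b)) := by
  have := b.finiteDimensional_of_finite
  intro hbdd
  obtain ⟨R, hR⟩ := hbdd.subset_closedBall 0
  obtain ⟨ε, hε, hball⟩ := Metric.isOpen_iff.mp isOpen_interior x hx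
  obtain ⟨v, hv, hray⟩ := hU.exists_norm_eq_one_ray_subset_closure hunb (interior_subset hx)
  obtain ⟨t, ht, z, hz, htz⟩ := exists_natCast_smul_near b v ⌈R + ‖x‖ + ε⌉₊ (half_pos hε)
  have hfar : x + (2 * (t : ℝ)) • v ∈ closure U := hray _ (by positivity)
  have hnear : x + (2 : ℝ) • (z - (t : ℝ) • v) ∈ interior U := by
    refine hball ?_
    rw [Metric.mem_ball, dist_eq_norm, add_sub_cancel_left, norm_smul, norm_sub_rev]
    norm_num
    linarith
  have hmid : x + z ∈ U := by
    refine interior_subset ?_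
    convert hU.combo_closure_interior_mem_interior hfar hnear (a := 1 / 2) (b := 1 / 2)
      (by norm_num) (by norm_num) (by norm_num) using 1
    module
  have hbound : ‖x + z‖ ≤ R := by
    simpa using hR ⟨hmid, add_mem hxb hz⟩
  have htv : ‖(t : ℝ) • v‖ = t := by simp [norm_smul, hv]
  have hlower : (t : ℝ) - ε / 2 - ‖x‖ ≤ ‖x + z‖ := by
    have h₁ := norm_sub_norm_le ((t : ℝ) • v) ((t : ℝ) • v - z)
    have h₂ := norm_sub_norm_le z (-x)
    rw [sub_sub_cancel] at h₁
    rw [sub_neg_eq_add, norm_neg, add_comm] at h₂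
    linarith
  have hT : R + ‖x‖ + ε ≤ t := (Nat.le_ceil _).trans (Nat.cast_le.mpr ht)
  linarith

/-- Only finitely many polytopes have vertices in the lattice and lie in a given bounded set. -/
theorem not_isBounded_iUnion_of_injective {P : ℕ → Set E} (hP : Function.Injective P)
    (hpoly : ∀ i, ∃ W : Finset E,
      (W : Set E) ⊆ span ℤ (range b) ∧ P i = convexHull ℝ (W : Set E)) :
    ¬ IsBounded (⋃ i, P i) := by
  have := b.finiteDimensional_of_finite
  intro hbdd
  have hrange : range P ⊆ convexHull ℝ '' {A | A ⊆ (⋃ i, P i) ∩ span ℤ (range b)} := by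
    rintro - ⟨i, rfl⟩
    obtain ⟨W, hWb, hW⟩ := hpoly i
    exact ⟨W, fun w hw => ⟨mem_iUnion_of_mem i (hW ▸ subset_convexHull ℝ _ hw), hWb hw⟩, hW.symm⟩
  exact infinite_range_of_injective hP
    (((setFinite_inter b hbdd).finite_subsets.image _).subset hrange)

end ZSpan

theorem stmt_13_general (d : ℕ) (ℓ κ : Module.Basis (Fin d) ℝ (Fin d → ℝ))
    (L K : AddSubgroup (Fin d → ℝ))
    (hL : L = AddSubgroup.closure (Set.range ℓ))
    (hK : K = AddSubgroup.closure (Set.range κ))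
    (P : Set (Fin d → ℝ))
    (Pseq : ℕ → Set (Fin d → ℝ))
    (h0 : Pseq 0 = P)
    (hpoly : ∀ i, ∃ W : Finset (Fin d → ℝ),
      (W : Set (Fin d → ℝ)) ⊆ (L : Set (Fin d → ℝ)) ∧ Pseq i = convexHull ℝ (W : Set (Fin d → ℝ)))
    (hmono : ∀ i, Pseq i ⊂ Pseq (i + 1))
    (hcard : ∀ i, (Pseq i ∩ (K : Set (Fin d → ℝ))).ncard = (P ∩ (K : Set (Fin d → ℝ))).ncard) :
    interior P ∩ (K : Set (Fin d → ℝ)) = ∅ := by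
  subst h0 hL hK
  simp only [← span_int_eq_addSubgroupClosure, coe_toAddSubgroup] at hpoly hcard ⊢
  have hstrict : StrictMono Pseq := strictMono_nat_of_lt_succ hmono
  have hbdd (i : ℕ) : IsBounded (Pseq i) := by
    obtain ⟨W, -, hW⟩ := hpoly i
    exact hW ▸ isBounded_convexHull.mpr W.finite_toSet.isBounded
  have hconv : Convex ℝ (⋃ i, Pseq i) := hstrict.monotone.directed_le.convex_iUnion fun i => by
    obtain ⟨W, -, hW⟩ := hpoly i
    exact hW ▸ convex_convexHull ℝ _
  have hlattice : (⋃ i, Pseq i) ∩ span ℤ (range κ) = Pseq 0 ∩ span ℤ (range κ) :=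
    iUnion_inter_eq_of_ncard_inter_eq hstrict.monotone
      (fun i => ZSpan.setFinite_inter κ (hbdd i)) hcard
  refine eq_empty_of_forall_notMem fun x ⟨hxP, hxK⟩ => ?_
  refine ZSpan.not_isBounded_inter_span_of_mem_interior κ hconv
    (ZSpan.not_isBounded_iUnion_of_injective ℓ hstrict.injective hpoly)
    (interior_mono (subset_iUnion Pseq 0) hxP) hxK ?_
  exact hlattice ▸ (hbdd 0).subset inter_subset_left

/-- let `L` be a rank-`d` lattice in `ℝ^d` (generated by an ℝ-basis `ℓ`)
and `K ⊆ L` a full-rank sublattice (generated by an ℝ-basis `κ`).  If an `L`-polytope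
`P` is infinitely growable, i.e. there is an infinite strictly increasing chain of
`L`-polytopes starting at `P` all containing the same number of points of `K`, then
`P` contains no point of `K` in its interior. -/
theorem stmt_13 (d : ℕ) (ℓ κ : Module.Basis (Fin d) ℝ (Fin d → ℝ))
    (L K : AddSubgroup (Fin d → ℝ))
    (hL : L = AddSubgroup.closure (Set.range ℓ))
    (hK : K = AddSubgroup.closure (Set.range κ))
    (hKL : K ≤ L)
    (V : Finset (Fin d → ℝ)) (hV : (V : Set (Fin d → ℝ)) ⊆ (L : Set (Fin d → ℝ)))
    (P : Set (Fin d → ℝ)) (hPdef : P = convexHull ℝ (V : Set (Fin d → ℝ)))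
    (Pseq : ℕ → Set (Fin d → ℝ))
    (h0 : Pseq 0 = P)
    (hpoly : ∀ i, ∃ W : Finset (Fin d → ℝ),
      (W : Set (Fin d → ℝ)) ⊆ (L : Set (Fin d → ℝ)) ∧ Pseq i = convexHull ℝ (W : Set (Fin d → ℝ)))
    (hmono : ∀ i, Pseq i ⊂ Pseq (i + 1))
    (hcard : ∀ i, (Pseq i ∩ (K : Set (Fin d → ℝ))).ncard = (P ∩ (K : Set (Fin d → ℝ))).ncard) :
    interior P ∩ (K : Set (Fin d → ℝ)) = ∅ :=
  stmt_13_general d ℓ κ L K hL hK P Pseq h0 hpoly hmono hcard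
end

section
/- Every minimal polygon of size zero (containing no lattice points) with denominator r is affinely unimodularly equivalent to a triangle of the form (1/r)(Δ + v), where Δ = conv((0,0),(1,0),(0,1)) and v is a lattice point in the square [0,r−1]², such that (1/r)(Δ+v) contains no points of ℤ². -/
open Set Pointwise

/-- A rational polygon with denominator `r`: a two-dimensional polytope whose vertices
become lattice points after dilation by `r`. -/
def IsRatPolygon (r : ℕ) (P : Set (ℝ × ℝ)) : Prop :=
  (∃ V : Finset (ℝ × ℝ), (∀ v ∈ V, (r : ℝ) • v ∈ latt) ∧
    P = convexHull ℝ (V : Set (ℝ × ℝ))) ∧ (interior P).Nonempty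

/-- The points of the refined lattice `(1/r)ℤ²`. -/
def ratPts (r : ℕ) : Set (ℝ × ℝ) := {p | ∃ m n : ℤ, p = ((m : ℝ) / r, (n : ℝ) / r)}

/-- A minimal polygon of denominator `r` and size `k`: removing any vertex from its set
of `(1/r)ℤ²`-points and taking the convex hull decreases the size or the dimension. -/
def IsMinimal (r k : ℕ) (P : Set (ℝ × ℝ)) : Prop :=
  IsRatPolygon r P ∧ (P ∩ latt).ncard = k ∧
  ∀ v ∈ Set.extremePoints ℝ P,
    ((convexHull ℝ ((P ∩ ratPts r) \ {v}) ∩ latt).ncard < k ∨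
      ¬ (interior (convexHull ℝ ((P ∩ ratPts r) \ {v}))).Nonempty)

/-!
If a `(1/r)ℤ²`-point `d` of `P` were not one of three non-collinear vertices `a, b, c`, then
one of the triangles `dbc, adc, abd` would be non-degenerate, and it survives the removal of
the vertex it avoids; so `P` is the triangle `abc` and its only `(1/r)ℤ²`-points are `a, b, c`.
Scaled by `r`, `abc` is an empty lattice triangle, hence has determinant `±1`: otherwise
`b - a` and `c - a` span a proper sublattice of `ℤ²`, and a point outside it, reduced into the
fundamental parallelogram, lies in `abc` or in its reflection through the midpoint of `bc`.
The inverse of the matrix with columns `b - a`, `c - a` then maps `abc` onto a translate of `Δ`,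
and an integral translation brings it to `(1/r)(Δ + v)` with `v ∈ [0, r-1]²`.
-/

section Collinear

variable {k V P : Type*} [Field k] [AddCommGroup V] [Module k V] [AddTorsor V P]

theorem affineSpan_eq_top_iff_not_collinear [FiniteDimensional k V]
    (hV : Module.finrank k V = 2) {s : Set P} : affineSpan k s = ⊤ ↔ ¬Collinear k s := by
  rcases s.eq_empty_or_nonempty with rfl | hs
  · simp [collinear_empty]
  rw [AffineSubspace.affineSpan_eq_top_iff_vectorSpan_eq_top_of_nonempty k V P hs,
    collinear_iff_finrank_le_one, not_le]
  refine ⟨fun h => by rw [h, finrank_top, hV]; omega, fun h => ?_⟩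
  exact Submodule.eq_top_of_finrank_eq (le_antisymm (Submodule.finrank_le _) (hV ▸ h))

theorem collinear_of_forall_collinear_triple {s : Set P}
    (h : ∀ a ∈ s, ∀ b ∈ s, ∀ c ∈ s, Collinear k {a, b, c}) : Collinear k s := by
  by_cases hs : s.Nontrivial
  · obtain ⟨a, ha, b, hb, hab⟩ := hs
    have hsub : s ⊆ line[k, a, b] := fun c hc =>
      (h a ha b hb c hc).mem_affineSpan_of_mem_of_ne (by simp) (by simp) (by simp) hab
    have hle : vectorSpan k s ≤ vectorSpan k {a, b} := by
      rw [← direction_affineSpan, ← direction_affineSpan k {a, b}]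
      exact AffineSubspace.direction_le (affineSpan_le.2 hsub)
    exact (Submodule.rank_mono hle).trans (collinear_pair k a b)
  · rcases (not_nontrivial_iff.1 hs).eq_empty_or_singleton with rfl | ⟨x, rfl⟩
    exacts [collinear_empty k P, collinear_singleton k x]

theorem exists_not_collinear_triple {s : Set P} (h : ¬Collinear k s) :
    ∃ a ∈ s, ∃ b ∈ s, ∃ c ∈ s, ¬Collinear k {a, b, c} := by
  by_contra! hcol
  exact h (collinear_of_forall_collinear_triple hcol)

theorem not_collinear_or_of_not_collinear {a b c d : P} (h : ¬Collinear k {a, b, c})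
    (hda : d ≠ a) :
    ¬Collinear k {d, b, c} ∨ ¬Collinear k {a, d, c} ∨ ¬Collinear k {a, b, d} := by
  by_contra! hcol
  obtain ⟨-, hc, hb⟩ := hcol
  refine h ((collinear_insert_insert_of_mem_affineSpan_pair
    (hb.mem_affineSpan_of_mem_of_ne (p₁ := a) (p₂ := d) (p₃ := b) (by simp) (by simp) (by simp)
      hda.symm)
    (hc.mem_affineSpan_of_mem_of_ne (p₁ := a) (p₂ := d) (p₃ := c) (by simp) (by simp) (by simp)
      hda.symm)).subset ?_)
  intro x hx
  simp only [mem_insert_iff, mem_singleton_iff] at hx ⊢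
  tauto

theorem eq_triple_of_collinear_diff {T : Set P} {a b c : P} (habc : ¬Collinear k {a, b, c})
    (hT : {a, b, c} ⊆ T) (ha : Collinear k (T \ {a})) (hb : Collinear k (T \ {b}))
    (hc : Collinear k (T \ {c})) : T = {a, b, c} := by
  refine Subset.antisymm (fun d hd => ?_) hT
  by_contra hd'
  simp only [mem_insert_iff, mem_singleton_iff, not_or] at hd'
  obtain ⟨hda, hdb, hdc⟩ := hd'
  have hab := ne₁₂_of_not_collinear habc
  have hac := ne₁₃_of_not_collinear habc
  have hbc := ne₂₃_of_not_collinear habc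
  obtain ⟨haT, hbT, hcT⟩ : a ∈ T ∧ b ∈ T ∧ c ∈ T := by simpa [insert_subset_iff] using hT
  have mem : ∀ {x v}, x ∈ T → x ≠ v → x ∈ T \ {v} := fun hx hxv => ⟨hx, hxv⟩
  rcases not_collinear_or_of_not_collinear habc hda with h | h | h
  · exact h (ha.subset
      (insert_subset (mem hd hda) (pair_subset (mem hbT hab.symm) (mem hcT hac.symm))))
  · exact h (hb.subset (insert_subset (mem haT hab) (pair_subset (mem hd hdb) (mem hcT hbc.symm))))
  · exact h (hc.subset (insert_subset (mem haT hac) (pair_subset (mem hbT hbc) (mem hd hdc))))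

end Collinear

section Plane

variable {E : Type*} [NormedAddCommGroup E] [NormedSpace ℝ E]

theorem Set.Finite.convexHull_extremePoints_convexHull {V : Set E} (hV : V.Finite) :
    convexHull ℝ ((convexHull ℝ V).extremePoints ℝ) = convexHull ℝ V := by
  rw [← ((hV.subset extremePoints_convexHull_subset).isClosed_convexHull ℝ).closure_eq,
    closure_convexHull_extremePoints (hV.isCompact_convexHull (𝕜 := ℝ)) (convex_convexHull ℝ V)]

theorem interior_convexHull_nonempty_of_not_collinear [FiniteDimensional ℝ E]
    (hE : Module.finrank ℝ E = 2) {s : Set E} (h : ¬Collinear ℝ s) :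
    (interior (convexHull ℝ s)).Nonempty :=
  interior_convexHull_nonempty_iff_affineSpan_eq_top.2
    ((affineSpan_eq_top_iff_not_collinear hE).2 h)

theorem exists_triangle_of_minimal [FiniteDimensional ℝ E] (hE : Module.finrank ℝ E = 2)
    {P S : Set E} {V : Finset E} (hVS : (V : Set E) ⊆ S) (hPV : P = convexHull ℝ V)
    (hint : (interior P).Nonempty)
    (hmin : ∀ v ∈ P.extremePoints ℝ, ¬(interior (convexHull ℝ ((P ∩ S) \ {v}))).Nonempty) :
    ∃ a b c, ¬Collinear ℝ {a, b, c} ∧ P ∩ S = {a, b, c} ∧ P = convexHull ℝ {a, b, c} := by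
  have hconv : Convex ℝ P := hPV ▸ convex_convexHull ℝ _
  have hEV : P.extremePoints ℝ ⊆ V := hPV ▸ extremePoints_convexHull_subset
  have hEcol : ¬Collinear ℝ (P.extremePoints ℝ) := by
    rw [← affineSpan_eq_top_iff_not_collinear hE, ← affineSpan_convexHull, hPV,
      V.finite_toSet.convexHull_extremePoints_convexHull, ← hPV]
    exact hconv.interior_nonempty_iff_affineSpan_eq_top.1 hint
  obtain ⟨a, ha, b, hb, c, hc, habc⟩ := exists_not_collinear_triple hEcol
  have hES : P.extremePoints ℝ ⊆ P ∩ S := fun x hx => ⟨extremePoints_subset hx, hVS (hEV hx)⟩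
  have hcol : ∀ v ∈ P.extremePoints ℝ, Collinear ℝ ((P ∩ S) \ {v}) := fun v hv =>
    not_not.1 fun h => hmin v hv (interior_convexHull_nonempty_of_not_collinear hE h)
  have hPS : P ∩ S = {a, b, c} := eq_triple_of_collinear_diff habc
    (by rintro x (rfl | rfl | rfl) <;> exact hES ‹_›) (hcol a ha) (hcol b hb) (hcol c hc)
  refine ⟨a, b, c, habc, hPS, Subset.antisymm ?_ (convexHull_min ?_ hconv)⟩
  · rw [← hPS, hPV]
    exact convexHull_mono (fun x hx => ⟨hPV ▸ subset_convexHull ℝ _ hx, hVS hx⟩)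
  · rw [← hPS]
    exact inter_subset_left

end Plane

theorem collinear_of_cross_eq_zero {p q s : ℝ × ℝ}
    (h : (q - p).1 * (s - p).2 = (q - p).2 * (s - p).1) : Collinear ℝ {p, q, s} := by
  by_cases hq : q = p
  · subst hq
    simpa using collinear_pair ℝ q s
  rw [collinear_iff_of_mem (mem_insert p _)]
  set n := (q - p).1 ^ 2 + (q - p).2 ^ 2
  have hn : n ≠ 0 := by
    intro hn
    refine hq (sub_eq_zero.1 (Prod.ext ?_ ?_)) <;> simp only [Prod.fst_zero, Prod.snd_zero] <;>
      nlinarith [sq_nonneg (q - p).1, sq_nonneg (q - p).2]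
  refine ⟨q - p, ?_⟩
  rintro x (rfl | rfl | rfl)
  · exact ⟨0, by simp⟩
  · exact ⟨1, by simp⟩
  · refine ⟨((q - p).1 * (x - p).1 + (q - p).2 * (x - p).2) / n, ?_⟩
    rw [eq_vadd_iff_vsub_eq, vsub_eq_sub]
    ext <;> simp only [Prod.smul_fst, Prod.smul_snd, smul_eq_mul] <;> field_simp
    · linear_combination (-(q - p).2) * h
    · linear_combination (q - p).1 * h

def det2 (u w : ℤ × ℤ) : ℤ := u.1 * w.2 - u.2 * w.1

theorem det2_swap (u w : ℤ × ℤ) : det2 w u = -det2 u w := by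
  unfold det2; ring

theorem det2_smul_add_smul (u w : ℤ × ℤ) (i j i' j' : ℤ) :
    det2 (i • u + j • w) (i' • u + j' • w) = (i * j' - j * i') * det2 u w := by
  simp only [det2, Prod.fst_add, Prod.snd_add, Prod.smul_fst, Prod.smul_snd, smul_eq_mul]
  ring

theorem det2_smul_eq_add (u w z : ℤ × ℤ) : det2 u w • z = det2 z w • u + det2 u z • w := by
  ext <;> simp only [det2, Prod.fst_add, Prod.snd_add, Prod.smul_fst, Prod.smul_snd,
    smul_eq_mul] <;> ring

theorem exists_forall_ne_smul_add_smul {u w : ℤ × ℤ} (hD : 1 < det2 u w) :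
    ∃ g : ℤ × ℤ, ∀ i j : ℤ, g ≠ i • u + j • w := by
  by_contra! h
  obtain ⟨i, j, h1⟩ := h (1, 0)
  obtain ⟨i', j', h2⟩ := h (0, 1)
  have h12 := det2_smul_add_smul u w i j i' j'
  rw [← h1, ← h2] at h12
  have : (i * j' - j * i') * det2 u w = 1 := by simpa [det2] using h12.symm
  have := Int.eq_one_or_neg_one_of_mul_eq_one' this
  omega

theorem exists_det2_smul_sub_eq {u w : ℤ × ℤ} (hD : 0 < det2 u w) (g : ℤ × ℤ) :
    ∃ s t i j : ℤ, 0 ≤ s ∧ s < det2 u w ∧ 0 ≤ t ∧ t < det2 u w ∧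
      det2 u w • (g - i • u - j • w) = s • u + t • w := by
  refine ⟨det2 g w % det2 u w, det2 u g % det2 u w, det2 g w / det2 u w, det2 u g / det2 u w,
    Int.emod_nonneg _ hD.ne', Int.emod_lt_of_pos _ hD, Int.emod_nonneg _ hD.ne',
    Int.emod_lt_of_pos _ hD, ?_⟩
  rw [smul_sub, smul_sub, det2_smul_eq_add, Int.emod_def, Int.emod_def, smul_smul, smul_smul]
  module

noncomputable def ratPt (r : ℕ) : ℤ × ℤ →+ ℝ × ℝ where
  toFun z := ((z.1 : ℝ) / r, (z.2 : ℝ) / r)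
  map_zero' := by simp
  map_add' x y := by ext <;> simp [add_div]

theorem ratPt_apply (r : ℕ) (z : ℤ × ℤ) : ratPt r z = ((z.1 : ℝ) / r, (z.2 : ℝ) / r) := rfl

theorem ratPt_injective {r : ℕ} (hr : r ≠ 0) : Function.Injective (ratPt r) := by
  intro x y h
  have hr' : (r : ℝ) ≠ 0 := Nat.cast_ne_zero.2 hr
  simp only [ratPt_apply, Prod.mk.injEq, div_left_inj' hr'] at h
  exact Prod.ext (by exact_mod_cast h.1) (by exact_mod_cast h.2)

theorem ratPts_eq_range (r : ℕ) : ratPts r = range (ratPt r) := by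
  ext p
  simp [ratPts, ratPt_apply, eq_comm]

theorem latt_subset_ratPts {r : ℕ} (hr : r ≠ 0) : latt ⊆ ratPts r := by
  rintro _ ⟨m, n, rfl⟩
  have hr' : (r : ℝ) ≠ 0 := Nat.cast_ne_zero.2 hr
  refine ⟨m * r, n * r, ?_⟩
  push_cast
  rw [mul_div_cancel_right₀ _ hr', mul_div_cancel_right₀ _ hr']

theorem mem_ratPts_of_smul_mem_latt {r : ℕ} (hr : r ≠ 0) {p : ℝ × ℝ} (h : (r : ℝ) • p ∈ latt) :
    p ∈ ratPts r := by
  obtain ⟨m, n, h⟩ := h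
  have hr' : (r : ℝ) ≠ 0 := Nat.cast_ne_zero.2 hr
  simp only [Prod.ext_iff, Prod.smul_fst, Prod.smul_snd, smul_eq_mul] at h
  exact ⟨m, n, Prod.ext (by rw [← h.1]; field_simp) (by rw [← h.2]; field_simp)⟩

theorem collinear_ratPt_of_det2_eq_zero (r : ℕ) {a b c : ℤ × ℤ}
    (h : det2 (b - a) (c - a) = 0) : Collinear ℝ {ratPt r a, ratPt r b, ratPt r c} := by
  apply collinear_of_cross_eq_zero
  rw [← map_sub, ← map_sub, ratPt_apply, ratPt_apply, div_mul_div_comm, div_mul_div_comm]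
  congr 1
  exact_mod_cast sub_eq_zero.1 h

theorem ratPt_mem_convexHull (r : ℕ) {a b c q : ℤ × ℤ} {α β γ : ℤ} (hα : 0 ≤ α) (hβ : 0 ≤ β)
    (hγ : 0 ≤ γ) (hpos : 0 < α + β + γ) (h : (α + β + γ) • q = α • a + β • b + γ • c) :
    ratPt r q ∈ convexHull ℝ {ratPt r a, ratPt r b, ratPt r c} := by
  have hmem := Finset.centerMass_mem_convexHull (R := ℝ) (s := {ratPt r a, ratPt r b, ratPt r c})
    Finset.univ (w := ![(α : ℝ), β, γ]) (z := ![ratPt r a, ratPt r b, ratPt r c])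
    (by simp [Fin.forall_fin_succ, hα, hβ, hγ])
    (by simp [Fin.sum_univ_three]; exact_mod_cast hpos) (by simp [Fin.forall_fin_succ])
  convert hmem using 1
  have hR := congrArg (ratPt r) h
  simp only [map_add, map_zsmul, ← Int.cast_smul_eq_zsmul ℝ] at hR
  have hpos' : (0 : ℝ) < α + β + γ := by exact_mod_cast hpos
  simp only [Finset.centerMass, Fin.sum_univ_three, Matrix.cons_val_zero, Matrix.cons_val_one,
    Matrix.cons_val_two, Matrix.head_cons, Matrix.tail_cons]
  rw [← hR]
  push_cast
  rw [smul_smul, inv_mul_cancel₀ hpos'.ne', one_smul]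

theorem det2_eq_one_of_forall_mem_convexHull (r : ℕ) {a b c : ℤ × ℤ}
    (hpos : 0 < det2 (b - a) (c - a))
    (hempty : ∀ q, ratPt r q ∈ convexHull ℝ {ratPt r a, ratPt r b, ratPt r c} →
      q = a ∨ q = b ∨ q = c) :
    det2 (b - a) (c - a) = 1 := by
  by_contra hne
  obtain ⟨g, hg⟩ := exists_forall_ne_smul_add_smul (by omega : 1 < det2 (b - a) (c - a))
  obtain ⟨s, t, i, j, hs0, hsD, ht0, htD, hred⟩ := exists_det2_smul_sub_eq hpos g
  set D := det2 (b - a) (c - a)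
  have hg' : ∀ i' j' : ℤ, g - i • (b - a) - j • (c - a) ≠ i' • (b - a) + j' • (c - a) :=
    fun i' j' h => hg (i + i') (j + j') (by linear_combination (norm := module) h)
  rcases le_or_gt (s + t) D with hst | hst
  · have hmem := ratPt_mem_convexHull r (a := a) (b := b) (c := c)
      (q := a + (g - i • (b - a) - j • (c - a)))
      (α := D - s - t) (β := s) (γ := t) (by omega) hs0 ht0 (by omega)
      (by rw [show D - s - t + s + t = D by ring]; linear_combination (norm := module) hred)
    rcases hempty _ hmem with h | h | h
    · exact hg' 0 0 (by linear_combination (norm := module) h)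
    · exact hg' 1 0 (by linear_combination (norm := module) h)
    · exact hg' 0 1 (by linear_combination (norm := module) h)
  · -- here the reflection of the reduced point through the midpoint of `bc` lies in `abc`
    have hmem := ratPt_mem_convexHull r (a := a) (b := b) (c := c)
      (q := b + c - a - (g - i • (b - a) - j • (c - a)))
      (α := s + t - D) (β := D - s) (γ := D - t) (by omega) (by omega) (by omega) (by omega)
      (by rw [show s + t - D + (D - s) + (D - t) = D by ring]
          linear_combination (norm := module) -hred)
    rcases hempty _ hmem with h | h | h
    · exact hg' 1 1 (by linear_combination (norm := module) -h)
    · exact hg' 0 1 (by linear_combination (norm := module) -h)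
    · exact hg' 1 0 (by linear_combination (norm := module) -h)

theorem det2_eq_one_or_neg_one_of_forall_mem_convexHull (r : ℕ) {a b c : ℤ × ℤ}
    (hD : det2 (b - a) (c - a) ≠ 0)
    (hempty : ∀ q, ratPt r q ∈ convexHull ℝ {ratPt r a, ratPt r b, ratPt r c} →
      q = a ∨ q = b ∨ q = c) :
    det2 (b - a) (c - a) = 1 ∨ det2 (b - a) (c - a) = -1 := by
  rcases hD.lt_or_gt with hneg | hpos
  · have hswap := det2_swap (b - a) (c - a)
    have := det2_eq_one_of_forall_mem_convexHull r (a := a) (b := c) (c := b) (by omega)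
      fun q hq => by
        rw [pair_comm] at hq
        rcases hempty q hq with h | h | h <;> simp [h]
    omega
  · exact Or.inl (det2_eq_one_of_forall_mem_convexHull r hpos hempty)

theorem Unimod.image_convexHull {f : ℝ × ℝ → ℝ × ℝ} (hf : Unimod f) (s : Set (ℝ × ℝ)) :
    f '' convexHull ℝ s = convexHull ℝ (f '' s) := by
  obtain ⟨a, b, c, d, e, g, -, hf⟩ := hf
  let L : ℝ × ℝ →ₗ[ℝ] ℝ × ℝ :=
    ((a : ℝ) • LinearMap.fst ℝ ℝ ℝ + (b : ℝ) • LinearMap.snd ℝ ℝ ℝ).prod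
      ((c : ℝ) • LinearMap.fst ℝ ℝ ℝ + (d : ℝ) • LinearMap.snd ℝ ℝ ℝ)
  have hF : f = ⇑(L.toAffineMap + AffineMap.const ℝ (ℝ × ℝ) ((e : ℝ), (g : ℝ))) := by
    funext p
    rw [hf]
    rfl
  rw [hF]
  exact AffineMap.image_convexHull _ s

theorem Unimod.mem_latt_of_apply_mem {f : ℝ × ℝ → ℝ × ℝ} (hf : Unimod f) {p : ℝ × ℝ}
    (hp : f p ∈ latt) : p ∈ latt := by
  obtain ⟨a, b, c, d, e, g, hdet, hf⟩ := hf
  obtain ⟨m, n, hmn⟩ := hp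
  rw [hf, Prod.mk.injEq] at hmn
  have hsq : ((a * d - b * c : ℤ) : ℝ) ^ 2 = 1 := by
    rcases hdet with h | h <;> rw [h] <;> norm_num
  push_cast at hsq
  -- the inverse of an integral matrix of determinant `±1` is `±` its adjugate
  refine ⟨(a * d - b * c) * (d * (m - e) - b * (n - g)),
    (a * d - b * c) * (a * (n - g) - c * (m - e)), Prod.ext ?_ ?_⟩ <;> push_cast
  · linear_combination (-p.1) * hsq + ((a * d - b * c) * d : ℝ) * hmn.1 -
      ((a * d - b * c) * b : ℝ) * hmn.2
  · linear_combination (-p.2) * hsq - ((a * d - b * c) * c : ℝ) * hmn.1 +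
      ((a * d - b * c) * a : ℝ) * hmn.2

theorem apply_ratPt {r : ℕ} (hr : r ≠ 0) (a b c d e g : ℤ) (z : ℤ × ℤ) :
    ((a : ℝ) * (ratPt r z).1 + b * (ratPt r z).2 + e,
      (c : ℝ) * (ratPt r z).1 + d * (ratPt r z).2 + g) =
      ratPt r (a * z.1 + b * z.2 + r * e, c * z.1 + d * z.2 + r * g) := by
  have hr' : (r : ℝ) ≠ 0 := Nat.cast_ne_zero.2 hr
  simp only [ratPt_apply, Prod.mk.injEq]
  push_cast
  constructor <;> field_simp

theorem exists_inverse_of_det2 {u w : ℤ × ℤ} (hD : det2 u w = 1 ∨ det2 u w = -1) :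
    ∃ a b c d : ℤ, (a * d - b * c = 1 ∨ a * d - b * c = -1) ∧
      a * u.1 + b * u.2 = 1 ∧ c * u.1 + d * u.2 = 0 ∧
      a * w.1 + b * w.2 = 0 ∧ c * w.1 + d * w.2 = 1 := by
  have hDD : det2 u w * det2 u w = 1 := by rcases hD with h | h <;> rw [h] <;> rfl
  refine ⟨det2 u w * w.2, -(det2 u w * w.1), -(det2 u w * u.2), det2 u w * u.1,
    ?_, ?_, ?_, ?_, ?_⟩
  all_goals unfold det2 at hD hDD ⊢
  · convert hD using 2 <;> linear_combination (u.1 * w.2 - u.2 * w.1) * hDD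
  · linear_combination hDD
  · ring
  · ring
  · linear_combination hDD

theorem exists_unimod_map_triangle {r : ℕ} (hr : 0 < r) {a b c : ℤ × ℤ}
    (hD : det2 (b - a) (c - a) = 1 ∨ det2 (b - a) (c - a) = -1) :
    ∃ v : ℤ × ℤ, 0 ≤ v.1 ∧ v.1 < r ∧ 0 ≤ v.2 ∧ v.2 < r ∧ ∃ f, Unimod f ∧
      f (ratPt r a) = ratPt r v ∧ f (ratPt r b) = ratPt r (v + (1, 0)) ∧
      f (ratPt r c) = ratPt r (v + (0, 1)) := by
  obtain ⟨A, B, C, E, hdet, hbA, hbC, hcA, hcC⟩ := exists_inverse_of_det2 hD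
  have hrZ : (0 : ℤ) < r := by exact_mod_cast hr
  obtain ⟨m, n, hm, hn⟩ : ∃ m n : ℤ, m = A * a.1 + B * a.2 ∧ n = C * a.1 + E * a.2 :=
    ⟨_, _, rfl, rfl⟩
  refine ⟨(m % r, n % r), Int.emod_nonneg _ hrZ.ne', Int.emod_lt_of_pos _ hrZ,
    Int.emod_nonneg _ hrZ.ne', Int.emod_lt_of_pos _ hrZ,
    fun p => ((A : ℝ) * p.1 + B * p.2 + (-(m / r) : ℤ), (C : ℝ) * p.1 + E * p.2 + (-(n / r) : ℤ)),
    ⟨A, B, C, E, _, _, hdet, fun p => rfl⟩, ?_, ?_, ?_⟩ <;>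
  · beta_reduce
    rw [apply_ratPt hr.ne']
    congr 1
    simp only [Prod.fst_sub, Prod.snd_sub] at hbA hbC hcA hcC
    ext <;> simp only [Int.emod_def, Prod.fst_add, Prod.snd_add] <;> grind

/-- every minimal polygon of size zero and denominator `r` is equivalent to
a lattice-point-free triangle `(1/r)(Δ + v)` with `Δ = conv((0,0),(1,0),(0,1))` and
`v ∈ ℤ² ∩ [0,r−1]²`. -/
theorem stmt_16 (r : ℕ) (hr : 0 < r) (P : Set (ℝ × ℝ)) (hmin : IsMinimal r 0 P) :
    ∃ v : ℤ × ℤ, 0 ≤ v.1 ∧ v.1 ≤ (r : ℤ) - 1 ∧ 0 ≤ v.2 ∧ v.2 ≤ (r : ℤ) - 1 ∧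
      (convexHull ℝ {(((v.1 : ℝ)) / r, ((v.2 : ℝ)) / r),
          (((v.1 : ℝ) + 1) / r, ((v.2 : ℝ)) / r),
          (((v.1 : ℝ)) / r, ((v.2 : ℝ) + 1) / r)} ∩ latt = ∅) ∧
      ∃ f : ℝ × ℝ → ℝ × ℝ, Unimod f ∧
        f '' P = convexHull ℝ {(((v.1 : ℝ)) / r, ((v.2 : ℝ)) / r),
          (((v.1 : ℝ) + 1) / r, ((v.2 : ℝ)) / r),
          (((v.1 : ℝ)) / r, ((v.2 : ℝ) + 1) / r)} := by
  obtain ⟨⟨⟨V, hV, hPV⟩, hint⟩, hcard, hmin⟩ := hmin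
  obtain ⟨x, y, z, hxyz, hPS, hP⟩ := exists_triangle_of_minimal (by simp)
    (fun v hv => mem_ratPts_of_smul_mem_latt hr.ne' (hV v hv)) hPV hint
    fun v hv => (hmin v hv).resolve_left (Nat.not_lt_zero _)
  have hlatt : P ∩ latt = ∅ := (ncard_eq_zero ((toFinite {x, y, z}).subset
    (hPS ▸ inter_subset_inter_right P (latt_subset_ratPts hr.ne')))).1 hcard
  rw [ratPts_eq_range] at hPS
  have hrange : {x, y, z} ⊆ range (ratPt r) := hPS ▸ inter_subset_right
  obtain ⟨a, rfl⟩ := hrange (mem_insert _ _)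
  obtain ⟨b, rfl⟩ := hrange (mem_insert_of_mem _ (mem_insert _ _))
  obtain ⟨c, rfl⟩ := hrange (mem_insert_of_mem _ (mem_insert_of_mem _ rfl))
  have hempty : ∀ q, ratPt r q ∈ convexHull ℝ {ratPt r a, ratPt r b, ratPt r c} →
      q = a ∨ q = b ∨ q = c := fun q hq => by
    have hq' : ratPt r q ∈ P ∩ range (ratPt r) := ⟨hP ▸ hq, q, rfl⟩
    simpa [hPS, (ratPt_injective hr.ne').eq_iff] using hq'
  have hD := det2_eq_one_or_neg_one_of_forall_mem_convexHull r
    (fun h => hxyz (collinear_ratPt_of_det2_eq_zero r h)) hempty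
  obtain ⟨v, hv1, hv1', hv2, hv2', f, hf, hfa, hfb, hfc⟩ := exists_unimod_map_triangle hr hD
  have himage : f '' P = convexHull ℝ {(((v.1 : ℝ)) / r, ((v.2 : ℝ)) / r),
      (((v.1 : ℝ) + 1) / r, ((v.2 : ℝ)) / r), (((v.1 : ℝ)) / r, ((v.2 : ℝ) + 1) / r)} := by
    rw [hP, hf.image_convexHull, image_insert_eq, image_insert_eq, image_singleton, hfa, hfb, hfc]
    simp [ratPt_apply]
  refine ⟨v, hv1, by omega, hv2, by omega, ?_, f, hf, himage⟩
  rw [← himage, eq_empty_iff_forall_notMem]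
  rintro _ ⟨⟨p, hp, rfl⟩, hpl⟩
  exact eq_empty_iff_forall_notMem.1 hlatt p ⟨hp, hf.mem_latt_of_apply_mem hpl⟩
end

section
/- Let P be a lattice polygon with first width w₁ (attained in the x-direction) and second width w₂, contained in the rectangle [0,w₁] × [0,w₂] with a vertex on each edge of the rectangle. For any integer h with 2 ≤ h ≤ w₁−2, setting h' = min(h, w₁−h), the polygon P contains at least h'−1 interior lattice points on the line x = h. -/
open Set

/-!
Let `[m, M]` be the slice of `P` on the line `x = h` and `ℓ = M - m`. Convexity gives supporting
lines `y ≤ M + s (x - h)` and `y ≥ m + t (x - h)`, and the points of `P` on `x = 0` and `x = w₁`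
force `|s - t| ≤ 1` unless `ℓ ≥ min(h, w₁ - h)`. Along the direction `(a, 1)`, `a ∈ ℤ`, the width
of `P` is then at most `ℓ + (s + a)(x - h) - (t + a)(y - h)` for some `x, y ∈ [0, w₁]`, and one of
`a = -⌊s⌋`, `a = -⌊s⌋ - 1` makes this at most `ℓ + max(h, w₁ - h)`. As that width is at least
`w₂ ≥ w₁`, we get `ℓ ≥ min(h, w₁ - h)`. The points `(h, y)` with `m < y < M` are interior (they lie
inside the quadrilateral spanned by the slice and the points of `P` on `x = 0` and `x = w₁`), and
the open interval `(m, M)` contains at least `⌈ℓ⌉ - 1` integers.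
-/

open Filter Topology

namespace Convex

variable {P : Set (ℝ × ℝ)}

theorem mk_mem_of_le_of_le (hconv : Convex ℝ P) {h m M y : ℝ}
    (hm : (h, m) ∈ P) (hM : (h, M) ∈ P) (hmy : m ≤ y) (hyM : y ≤ M) : (h, y) ∈ P := by
  have hline : ∀ y : ℝ, AffineMap.lineMap (h, (0 : ℝ)) (h, 1) y = (h, y) := fun y => by
    simp [AffineMap.lineMap_apply]
  have hslice := (hconv.affine_preimage (AffineMap.lineMap (h, (0 : ℝ)) (h, 1))).ordConnected
  simpa [hline] using hslice.out (by simpa [hline]) (by simpa [hline]) ⟨hmy, hyM⟩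

theorem chord_mem (hconv : Convex ℝ P) {p q : ℝ × ℝ} (hp : p ∈ P) (hq : q ∈ P) {h : ℝ}
    (hph : p.1 ≤ h) (hhq : h ≤ q.1) (hpq : p.1 < q.1) :
    (h, (p.2 * (q.1 - h) + q.2 * (h - p.1)) / (q.1 - p.1)) ∈ P := by
  have hd : 0 < q.1 - p.1 := by linarith
  convert hconv hp hq (div_nonneg (sub_nonneg.2 hhq) hd.le) (div_nonneg (sub_nonneg.2 hph) hd.le)
    (by field_simp; ring) using 1
  ext
  · simp only [Prod.fst_add, Prod.smul_fst, smul_eq_mul]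
    field_simp
    ring
  · simp only [Prod.snd_add, Prod.smul_snd, smul_eq_mul]
    field_simp

theorem exists_upper_support (hconv : Convex ℝ P) {h M : ℝ}
    (hM : ∀ z ∈ P, z.1 = h → z.2 ≤ M) (hl : ∃ z ∈ P, z.1 < h) (hr : ∃ z ∈ P, h < z.1) :
    ∃ s : ℝ, ∀ z ∈ P, z.2 ≤ M + s * (z.1 - h) := by
  have slope_le : ∀ p ∈ P, p.1 < h → ∀ q ∈ P, h < q.1 →
      (q.2 - M) / (q.1 - h) ≤ (M - p.2) / (h - p.1) := by
    intro p hp hph q hq hhq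
    have := hM _ (hconv.chord_mem hp hq hph.le hhq.le (hph.trans hhq)) rfl
    rw [div_le_iff₀ (by linarith)] at this
    rw [div_le_div_iff₀ (by linarith) (by linarith)]
    linarith
  obtain ⟨p₀, hp₀, hp₀h⟩ := hl
  obtain ⟨q₀, hq₀, hq₀h⟩ := hr
  set slopes := (fun q : ℝ × ℝ => (q.2 - M) / (q.1 - h)) '' {q ∈ P | h < q.1}
  have hne : slopes.Nonempty := ⟨_, mem_image_of_mem _ ⟨hq₀, hq₀h⟩⟩
  have hbdd : BddAbove slopes :=
    ⟨_, by rintro _ ⟨q, ⟨hq, hhq⟩, rfl⟩; exact slope_le p₀ hp₀ hp₀h q hq hhq⟩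
  refine ⟨sSup slopes, fun z hz => ?_⟩
  rcases lt_trichotomy z.1 h with hzh | hzh | hzh
  · have := csSup_le hne (by rintro _ ⟨q, ⟨hq, hhq⟩, rfl⟩; exact slope_le z hz hzh q hq hhq)
    rw [le_div_iff₀ (by linarith)] at this
    linarith
  · simpa [hzh] using hM z hz hzh
  · have := le_csSup hbdd (mem_image_of_mem _ ⟨hz, hzh⟩)
    rw [div_le_iff₀ (by linarith)] at this
    linarith

theorem exists_lower_support (hconv : Convex ℝ P) {h m : ℝ}
    (hm : ∀ z ∈ P, z.1 = h → m ≤ z.2) (hl : ∃ z ∈ P, z.1 < h) (hr : ∃ z ∈ P, h < z.1) :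
    ∃ t : ℝ, ∀ z ∈ P, m + t * (z.1 - h) ≤ z.2 := by
  set flip : ℝ × ℝ →ₗ[ℝ] ℝ × ℝ := LinearMap.prodMap LinearMap.id (-LinearMap.id)
  have hflip : ∀ z, flip z = (z.1, -z.2) := fun z => rfl
  obtain ⟨l, hl, hlh⟩ := hl
  obtain ⟨r, hr, hhr⟩ := hr
  obtain ⟨s, hs⟩ := (hconv.linear_image flip).exists_upper_support (h := h) (M := -m)
    (by rintro _ ⟨z, hz, rfl⟩ hzh; simpa [hflip] using hm z hz hzh)
    ⟨_, mem_image_of_mem _ hl, hlh⟩ ⟨_, mem_image_of_mem _ hr, hhr⟩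
  refine ⟨-s, fun z hz => ?_⟩
  have := hs _ (mem_image_of_mem flip hz)
  simp only [hflip] at this
  linarith

theorem exists_vertical_bounds (hconv : Convex ℝ P) (hcpt : IsCompact P)
    {h : ℝ} {l r : ℝ × ℝ} (hl : l ∈ P) (hr : r ∈ P) (hlh : l.1 ≤ h) (hhr : h ≤ r.1)
    (hlr : l.1 < r.1) :
    ∃ m M : ℝ, (h, m) ∈ P ∧ (h, M) ∈ P ∧ ∀ z ∈ P, z.1 = h → m ≤ z.2 ∧ z.2 ≤ M := by
  set S := (fun y : ℝ => (h, y)) ⁻¹' P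
  have hS : IsCompact S :=
    (hcpt.image continuous_snd).of_isClosed_subset (hcpt.isClosed.preimage (by fun_prop))
      fun y hy => ⟨(h, y), hy, rfl⟩
  have hne : S.Nonempty := ⟨_, hconv.chord_mem hl hr hlh hhr hlr⟩
  obtain ⟨m, hmS, hmin⟩ := hS.exists_isLeast hne
  obtain ⟨M, hMS, hmax⟩ := hS.exists_isGreatest hne
  refine ⟨m, M, hmS, hMS, fun z hz hzh => ⟨hmin ?_, hmax ?_⟩⟩ <;>
    simpa [S, ← hzh] using hz

theorem mem_of_join_vertical (hconv : Convex ℝ P) {h m M : ℝ} {r : ℝ × ℝ}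
    (hm : (h, m) ∈ P) (hM : (h, M) ∈ P) (hr : r ∈ P) {c v : ℝ} (hc₀ : 0 ≤ c) (hc₁ : c < 1)
    (hmv : m * (1 - c) + c * r.2 ≤ v) (hvM : v ≤ M * (1 - c) + c * r.2) :
    (h + c * (r.1 - h), v) ∈ P := by
  have hc : 0 < 1 - c := by linarith
  have hy : (h, (v - c * r.2) / (1 - c)) ∈ P :=
    hconv.mk_mem_of_le_of_le hm hM (by rw [le_div_iff₀ hc]; linarith)
      (by rw [div_le_iff₀ hc]; linarith)
  convert hconv hy hr hc.le hc₀ (by ring) using 1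
  ext
  · simp only [Prod.smul_mk, smul_eq_mul, Prod.fst_add, Prod.smul_fst]
    ring
  · simp only [Prod.smul_mk, smul_eq_mul, Prod.snd_add, Prod.smul_snd]
    field_simp
    ring

theorem eventually_mem_of_vertical (hconv : Convex ℝ P) {h m M y : ℝ} {r : ℝ × ℝ}
    (hm : (h, m) ∈ P) (hM : (h, M) ∈ P) (hr : r ∈ P) (hrh : r.1 ≠ h)
    (hmy : m < y) (hyM : y < M) :
    ∀ᶠ z in 𝓝 (h, y), 0 ≤ (z.1 - h) / (r.1 - h) → z ∈ P := by
  set c : ℝ × ℝ → ℝ := fun z => (z.1 - h) / (r.1 - h)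
  set lo : ℝ × ℝ → ℝ := fun z => m * (1 - c z) + c z * r.2
  set hi : ℝ × ℝ → ℝ := fun z => M * (1 - c z) + c z * r.2
  have hc : Continuous c := by fun_prop
  have hlo : Continuous lo := by fun_prop
  have hhi : Continuous hi := by fun_prop
  have hc₀ : c (h, y) = 0 := by simp [c]
  filter_upwards [hc.continuousAt.eventually_lt (continuousAt_const (y := 1)) (by simp [hc₀]),
    hlo.continuousAt.eventually_lt continuous_snd.continuousAt (by simp [lo, hc₀, hmy]),
    continuous_snd.continuousAt.eventually_lt hhi.continuousAt (by simp [hi, hc₀, hyM])]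
    with z hz₁ hmz hzM hz₀
  convert hconv.mem_of_join_vertical hm hM hr hz₀ hz₁ hmz.le hzM.le using 2
  rw [div_mul_cancel₀ _ (sub_ne_zero.2 hrh)]
  ring

theorem mem_interior_of_vertical (hconv : Convex ℝ P) {h m M y : ℝ} {l r : ℝ × ℝ}
    (hl : l ∈ P) (hr : r ∈ P) (hlh : l.1 < h) (hhr : h < r.1)
    (hm : (h, m) ∈ P) (hM : (h, M) ∈ P) (hmy : m < y) (hyM : y < M) :
    (h, y) ∈ interior P := by
  rw [mem_interior_iff_mem_nhds]
  filter_upwards [hconv.eventually_mem_of_vertical hm hM hl hlh.ne hmy hyM,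
    hconv.eventually_mem_of_vertical hm hM hr hhr.ne' hmy hyM] with z hzl hzr
  rcases le_total z.1 h with hzh | hzh
  · exact hzl (div_nonneg_of_nonpos (by linarith) (by linarith))
  · exact hzr (div_nonneg (by linarith) (by linarith))

end Convex

theorem exists_int_shift_le {s t h w : ℝ} (hh : 0 ≤ h) (hhw : h ≤ w) (hst : |s - t| ≤ 1) :
    ∃ a : ℤ, ∀ x ∈ Icc 0 w, ∀ y ∈ Icc 0 w,
      (s + a) * (x - h) - (t + a) * (y - h) ≤ max h (w - h) := by
  obtain ⟨hst₁, hst₂⟩ := abs_le.1 hst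
  set u := s - ⌊s⌋
  set v := t - ⌊s⌋
  have hu₀ : 0 ≤ u := Int.fract_nonneg s
  have hu₁ : u < 1 := Int.fract_lt_one s
  have shift₀ : ∀ x y : ℝ, (s + ((-⌊s⌋ : ℤ) : ℝ)) * (x - h) - (t + ((-⌊s⌋ : ℤ) : ℝ)) * (y - h)
      = u * (x - h) - v * (y - h) := fun x y => by push_cast; ring
  have shift₁ : ∀ x y : ℝ,
      (s + ((-⌊s⌋ - 1 : ℤ) : ℝ)) * (x - h) - (t + ((-⌊s⌋ - 1 : ℤ) : ℝ)) * (y - h)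
      = (u - 1) * (x - h) - (v - 1) * (y - h) := fun x y => by push_cast; ring
  have hmax := le_max_left h (w - h)
  have hmax' := le_max_right h (w - h)
  rcases le_or_gt v 0 with hv₀ | hv₀
  · refine ⟨-⌊s⌋, fun x hx y hy => ?_⟩
    rw [shift₀]
    nlinarith [mul_le_mul_of_nonneg_left hx.2 hu₀,
      mul_le_mul_of_nonneg_left hy.2 (neg_nonneg.2 hv₀)]
  rcases le_or_gt 1 v with hv₁ | hv₁
  · refine ⟨-⌊s⌋ - 1, fun x hx y hy => ?_⟩
    rw [shift₁]
    nlinarith [mul_le_mul_of_nonneg_left hx.1 (sub_nonneg.2 hu₁.le),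
      mul_le_mul_of_nonneg_left hy.1 (sub_nonneg.2 hv₁)]
  -- For `0 < v < 1` the bounds `u (w - h) + v h` and `(1 - u) h + (1 - v) (w - h)` of the two
  -- shifts add up to `(w - h) (1 + s - t) + h (1 - s + t) ≤ 2 max h (w - h)`.
  rcases le_or_gt (u * (w - h) + v * h) (max h (w - h)) with hA | hA
  · refine ⟨-⌊s⌋, fun x hx y hy => ?_⟩
    rw [shift₀]
    nlinarith [mul_le_mul_of_nonneg_left hx.2 hu₀, mul_le_mul_of_nonneg_left hy.1 hv₀.le]
  · refine ⟨-⌊s⌋ - 1, fun x hx y hy => ?_⟩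
    rw [shift₁]
    nlinarith [mul_le_mul_of_nonneg_left hx.1 (sub_nonneg.2 hu₁.le),
      mul_le_mul_of_nonneg_left hy.2 (sub_nonneg.2 hv₁.le)]

theorem min_le_slice_length {P : Set (ℝ × ℝ)} (hconv : Convex ℝ P) {w h m M : ℝ}
    (hbox : ∀ z ∈ P, z.1 ∈ Icc 0 w) (hleft : ∃ z ∈ P, z.1 = 0) (hright : ∃ z ∈ P, z.1 = w)
    (hh : 0 < h) (hhw : h < w)
    (hslice : ∀ z ∈ P, z.1 = h → m ≤ z.2 ∧ z.2 ≤ M)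
    (hwidth : ∀ a : ℤ, ∃ p ∈ P, ∃ q ∈ P, w ≤ (a * p.1 + p.2) - (a * q.1 + q.2)) :
    min h (w - h) ≤ M - m := by
  obtain ⟨l, hl, hl₁⟩ := hleft
  obtain ⟨r, hr, hr₁⟩ := hright
  have hsides : (∃ z ∈ P, z.1 < h) ∧ ∃ z ∈ P, h < z.1 :=
    ⟨⟨l, hl, by linarith⟩, ⟨r, hr, by linarith⟩⟩
  obtain ⟨s, hs⟩ :=
    hconv.exists_upper_support (fun z hz hzh => (hslice z hz hzh).2) hsides.1 hsides.2
  obtain ⟨t, ht⟩ :=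
    hconv.exists_lower_support (fun z hz hzh => (hslice z hz hzh).1) hsides.1 hsides.2
  by_contra! hlt
  have hst : |s - t| ≤ 1 := by
    have hl' := (ht l hl).trans (hs l hl)
    have hr' := (ht r hr).trans (hs r hr)
    rw [hl₁] at hl'
    rw [hr₁] at hr'
    have := min_le_left h (w - h)
    have := min_le_right h (w - h)
    rw [abs_le]
    constructor <;> nlinarith
  obtain ⟨a, ha⟩ := exists_int_shift_le hh.le hhw.le hst
  obtain ⟨p, hp, q, hq, hpq⟩ := hwidth a
  have := ha p.1 (hbox p hp) q.1 (hbox q hq)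
  nlinarith [hs p hp, ht q hq, min_add_max h (w - h)]

theorem sub_one_le_ncard_Ioo_floor_ceil {m M : ℝ} {k : ℕ} (hk : (k : ℝ) ≤ M - m) :
    k - 1 ≤ (Ioo ⌊m⌋ ⌈M⌉).ncard := by
  rw [← Finset.coe_Ioo, ncard_coe_finset, Int.card_Ioo]
  have : (k : ℝ) ≤ ⌈M⌉ - ⌊m⌋ := by linarith [Int.le_ceil M, Int.floor_le m]
  have : (k : ℤ) ≤ ⌈M⌉ - ⌊m⌋ := by exact_mod_cast this
  omega

theorem Convex.sub_one_le_ncard_interior_lattice_vertical {P : Set (ℝ × ℝ)}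
    (hconv : Convex ℝ P) {h m M : ℝ} {l r : ℝ × ℝ} (hl : l ∈ P) (hr : r ∈ P)
    (hlh : l.1 < h) (hhr : h < r.1) (hm : (h, m) ∈ P) (hM : (h, M) ∈ P)
    (hslice : ∀ z ∈ P, z.1 = h → m ≤ z.2 ∧ z.2 ≤ M) {k : ℕ} (hk : (k : ℝ) ≤ M - m) :
    k - 1 ≤ (interior P ∩ {p : ℝ × ℝ | p.1 = h ∧ ∃ j : ℤ, p.2 = j}).ncard := by
  set e : ℤ → ℝ × ℝ := fun j => (h, j)
  have he : Function.Injective e := fun i j hij => by simpa [e] using hij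
  have hsub : e '' Ioo ⌊m⌋ ⌈M⌉ ⊆ interior P ∩ {p : ℝ × ℝ | p.1 = h ∧ ∃ j : ℤ, p.2 = j} := by
    rintro _ ⟨j, ⟨hmj, hjM⟩, rfl⟩
    exact ⟨hconv.mem_interior_of_vertical hl hr hlh hhr hm hM (Int.floor_lt.1 hmj)
      (Int.lt_ceil.1 hjM), rfl, j, rfl⟩
  have hfin : (interior P ∩ {p : ℝ × ℝ | p.1 = h ∧ ∃ j : ℤ, p.2 = j}).Finite := by
    refine ((finite_Icc ⌊m⌋ ⌈M⌉).image e).subset ?_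
    rintro z ⟨hz, hzh, j, hzj⟩
    obtain ⟨hmz, hzM⟩ := hslice z (interior_subset hz) hzh
    rw [hzj] at hmz hzM
    exact ⟨j, ⟨Int.floor_le_iff.2 (by linarith), Int.le_ceil_iff.2 (by linarith)⟩,
      Prod.ext hzh.symm hzj.symm⟩
  calc k - 1 ≤ (Ioo ⌊m⌋ ⌈M⌉).ncard := sub_one_le_ncard_Ioo_floor_ceil hk
    _ = (e '' Ioo ⌊m⌋ ⌈M⌉).ncard := (ncard_image_of_injective _ he).symm
    _ ≤ _ := ncard_le_ncard hsub hfin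

theorem stmt_18_general (w1 w2 : ℕ) (P : Set (ℝ × ℝ))
    (hP : ∃ V : Finset (ℝ × ℝ), (V : Set (ℝ × ℝ)) ⊆ latt ∧
      P = convexHull ℝ (V : Set (ℝ × ℝ)))
    (hsub : P ⊆ Set.Icc (0 : ℝ) (w1 : ℝ) ×ˢ Set.Icc (0 : ℝ) (w2 : ℝ))
    (hleft : ∃ p ∈ P, p.1 = 0) (hright : ∃ p ∈ P, p.1 = (w1 : ℝ))
    (hw1 : ∀ u : ℤ × ℤ, u ≠ 0 → ∃ p ∈ P, ∃ q ∈ P,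
      (w1 : ℝ) ≤ ((u.1 : ℝ) * p.1 + (u.2 : ℝ) * p.2) - ((u.1 : ℝ) * q.1 + (u.2 : ℝ) * q.2))
    (hw2 : ∀ u : ℤ × ℤ, u.2 ≠ 0 → ∃ p ∈ P, ∃ q ∈ P,
      (w2 : ℝ) ≤ ((u.1 : ℝ) * p.1 + (u.2 : ℝ) * p.2) - ((u.1 : ℝ) * q.1 + (u.2 : ℝ) * q.2))
    (h : ℕ) (hh : 2 ≤ h) (hh2 : h ≤ w1 - 2) :
    min h (w1 - h) - 1 ≤
      (interior P ∩ {p : ℝ × ℝ | p.1 = (h : ℝ) ∧ ∃ m : ℤ, p.2 = (m : ℝ)}).ncard := by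
  obtain ⟨V, -, rfl⟩ := hP
  have hconv := convex_convexHull ℝ (V : Set (ℝ × ℝ))
  have hcpt := V.finite_toSet.isCompact_convexHull ℝ
  have hh₀ : (0 : ℝ) < h := by exact_mod_cast (by omega : 0 < h)
  have hhw : (h : ℝ) < w1 := by exact_mod_cast (by omega : h < w1)
  obtain ⟨l, hl, hl₁⟩ := hleft
  obtain ⟨r, hr, hr₁⟩ := hright
  obtain ⟨m, M, hm, hM, hslice⟩ :=
    hconv.exists_vertical_bounds hcpt hl hr (h := h) (by linarith) (by linarith) (by linarith)
  have hw12 : (w1 : ℝ) ≤ w2 := by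
    obtain ⟨p, hp, q, hq, hpq⟩ := hw1 (0, 1) (by decide)
    simp only [Int.cast_zero, Int.cast_one, zero_mul, one_mul, zero_add] at hpq
    linarith [(hsub hp).2.2, (hsub hq).2.1]
  have hk : min (h : ℝ) (w1 - h) ≤ M - m :=
    min_le_slice_length hconv (fun z hz => (hsub hz).1) ⟨l, hl, hl₁⟩ ⟨r, hr, hr₁⟩ hh₀ hhw
      hslice fun a => by
        obtain ⟨p, hp, q, hq, hpq⟩ := hw2 (a, 1) one_ne_zero
        exact ⟨p, hp, q, hq, by simpa using hw12.trans hpq⟩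
  refine hconv.sub_one_le_ncard_interior_lattice_vertical hl hr (by linarith) (by linarith) hm hM
    hslice ?_
  rwa [Nat.cast_min, Nat.cast_sub (by omega)]

/-- a lattice polygon with first width `w₁` (attained in the `x`-direction)
and second width `w₂`, inscribed in the rectangle `[0,w₁] × [0,w₂]` with a vertex on each
edge, contains at least `min(h, w₁−h) − 1` interior lattice points on the line `x = h`,
for every integer `2 ≤ h ≤ w₁ − 2`. -/
theorem stmt_18 (w1 w2 : ℕ) (P : Set (ℝ × ℝ))
    (hP : ∃ V : Finset (ℝ × ℝ), (V : Set (ℝ × ℝ)) ⊆ latt ∧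
      P = convexHull ℝ (V : Set (ℝ × ℝ)))
    (h2d : (interior P).Nonempty)
    (hsub : P ⊆ Set.Icc (0 : ℝ) (w1 : ℝ) ×ˢ Set.Icc (0 : ℝ) (w2 : ℝ))
    (hleft : ∃ p ∈ P, p.1 = 0) (hright : ∃ p ∈ P, p.1 = (w1 : ℝ))
    (hbot : ∃ p ∈ P, p.2 = 0) (htop : ∃ p ∈ P, p.2 = (w2 : ℝ))
    (hw1 : ∀ u : ℤ × ℤ, u ≠ 0 → ∃ p ∈ P, ∃ q ∈ P,
      (w1 : ℝ) ≤ ((u.1 : ℝ) * p.1 + (u.2 : ℝ) * p.2) - ((u.1 : ℝ) * q.1 + (u.2 : ℝ) * q.2))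
    (hw2 : ∀ u : ℤ × ℤ, u.2 ≠ 0 → ∃ p ∈ P, ∃ q ∈ P,
      (w2 : ℝ) ≤ ((u.1 : ℝ) * p.1 + (u.2 : ℝ) * p.2) - ((u.1 : ℝ) * q.1 + (u.2 : ℝ) * q.2))
    (h : ℕ) (hh : 2 ≤ h) (hh2 : h ≤ w1 - 2) :
    min h (w1 - h) - 1 ≤
      (interior P ∩ {p : ℝ × ℝ | p.1 = (h : ℝ) ∧ ∃ m : ℤ, p.2 = (m : ℝ)}).ncard :=
  stmt_18_general w1 w2 P hP hsub hleft hright hw1 hw2 h hh hh2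
end
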